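/- arXiv:1502.04309 — 5 statements merged into one kernel-verified Lean document; each statement's English description precedes it below -/
import Mathlib

section
/- c^{Z_m}(μ,ν) = inf_{r ∈ Σ_m} [ min_{(μ_z) ∈ 𝒫_X^r(μ)} Σ_{z∈Z_m} ∫_X c¹(x,z) dμ_z(x) + min_{(ν_z) ∈ 𝒫_Y^r(ν)} Σ_{z∈Z_m} ∫_Y c²(z,y) dν_z(y) ]. -/
open MeasureTheory

section AuxSD

variable {α : Type*} [MeasurableSpace α]

lemma auxSD_map_sum {β : Type*} [MeasurableSpace β] {ι : Type*} (s : Finset ι)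
    (μ : ι → Measure α) {f : α → β} (hf : Measurable f) :
    (∑ i ∈ s, μ i).map f = ∑ i ∈ s, (μ i).map f := by
  ext t ht
  rw [Measure.map_apply hf ht, Measure.finset_sum_apply, Measure.finset_sum_apply]
  exact Finset.sum_congr rfl fun i _ => (Measure.map_apply hf ht).symm

lemma auxSD_integrable {μ : Measure α} [IsFiniteMeasure μ] {f : α → ℝ} {M : ℝ}
    (hm : Measurable f) (hb : ∀ x, |f x| ≤ M) : Integrable f μ :=
  ⟨hm.aestronglyMeasurable, HasFiniteIntegral.of_bounded (C := M)
    (ae_of_all _ fun x => by rw [Real.norm_eq_abs]; exact hb x)⟩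

lemma auxSD_integral_abs_le {μ : Measure α} [IsFiniteMeasure μ] {f : α → ℝ} {M : ℝ}
    (hb : ∀ x, |f x| ≤ M) : |∫ x, f x ∂μ| ≤ M * (μ Set.univ).toReal := by
  rw [← Real.norm_eq_abs]
  exact norm_integral_le_of_norm_le_const (ae_of_all _ fun x => by
    rw [Real.norm_eq_abs]; exact hb x)

lemma auxSD_integral_ge {μ : Measure α} [IsFiniteMeasure μ] {f : α → ℝ} {M : ℝ}
    (hb : ∀ x, |f x| ≤ M) : -(M * (μ Set.univ).toReal) ≤ ∫ x, f x ∂μ :=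
  neg_le_of_abs_le (auxSD_integral_abs_le hb)

end AuxSD

/-- Kantorovich optimal transport cost between `μ` and `ν` for the cost `c`. -/
noncomputable def kant {X Y : Type*} [MeasurableSpace X] [MeasurableSpace Y]
    (μ : Measure X) (ν : Measure Y) (c : X → Y → ℝ) : ℝ :=
  sInf {t : ℝ | ∃ π : Measure (X × Y), IsProbabilityMeasure π ∧
    π.map Prod.fst = μ ∧ π.map Prod.snd = ν ∧ t = ∫ q, c q.1 q.2 ∂π}

/-- `c^{Z_m}(μ,ν)` equals the infimum over `r ∈ Σ_m` of the sum of
the two one-sided optimal-partition values. -/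
theorem stmt_4
    {X Y : Type*} [TopologicalSpace X] [PolishSpace X] [MeasurableSpace X] [BorelSpace X]
    [TopologicalSpace Y] [PolishSpace Y] [MeasurableSpace Y] [BorelSpace Y]
    {ι : Type*} [Fintype ι] [Nonempty ι]
    (μ : Measure X) (ν : Measure Y) [IsProbabilityMeasure μ] [IsProbabilityMeasure ν]
    (c1 : X → ι → ℝ) (c2 : ι → Y → ℝ)
    (hc1 : ∀ z, Continuous fun x => c1 x z) (hb1 : ∀ z, ∃ M, ∀ x, |c1 x z| ≤ M)
    (hc2 : ∀ z, Continuous fun y => c2 z y) (hb2 : ∀ z, ∃ M, ∀ y, |c2 z y| ≤ M) :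
    kant μ ν (fun x y => ⨅ z, (c1 x z + c2 z y))
      = sInf {t : ℝ | ∃ r : ι → ℝ, (∀ z, 0 ≤ r z) ∧ (∑ z, r z) = 1 ∧
          t = sInf {a : ℝ | ∃ μv : ι → Measure X,
                  (∑ z, μv z) = μ ∧ (∀ z, μv z Set.univ = ENNReal.ofReal (r z)) ∧
                  a = ∑ z, ∫ x, c1 x z ∂(μv z)}
            + sInf {b : ℝ | ∃ νv : ι → Measure Y,
                  (∑ z, νv z) = ν ∧ (∀ z, νv z Set.univ = ENNReal.ofReal (r z)) ∧
                  b = ∑ z, ∫ y, c2 z y ∂(νv z)}} := by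
  classical
  choose m1 hm1 using hb1
  choose m2 hm2 using hb2
  set M1 : ℝ := ∑ z, |m1 z| with hM1def
  set M2 : ℝ := ∑ z, |m2 z| with hM2def
  have hM1 : ∀ x z, |c1 x z| ≤ M1 := fun x z =>
    (hm1 z x).trans ((le_abs_self _).trans
      (Finset.single_le_sum (f := fun i => |m1 i|) (fun i _ => abs_nonneg _) (Finset.mem_univ z)))
  have hM2 : ∀ y z, |c2 z y| ≤ M2 := fun y z =>
    (hm2 z y).trans ((le_abs_self _).trans
      (Finset.single_le_sum (f := fun i => |m2 i|) (fun i _ => abs_nonneg _) (Finset.mem_univ z)))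
  have hM1nn : 0 ≤ M1 := Finset.sum_nonneg fun i _ => abs_nonneg _
  have hM2nn : 0 ≤ M2 := Finset.sum_nonneg fun i _ => abs_nonneg _
  set g : X × Y → ι → ℝ := fun q z => c1 q.1 z + c2 z q.2 with hgdef
  set c : X × Y → ℝ := fun q => ⨅ z, g q z with hcdef
  have hgmeas : ∀ z, Measurable fun q => g q z := fun z =>
    (((hc1 z).measurable.comp measurable_fst).add
      ((hc2 z).measurable.comp measurable_snd))
  have hcmeas : Measurable c := Measurable.iInf hgmeas
  have hgb : ∀ q z, |g q z| ≤ M1 + M2 := fun q z =>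
    (abs_add_le _ _).trans (add_le_add (hM1 _ _) (hM2 _ _))
  have hcb : ∀ q, |c q| ≤ M1 + M2 := by
    intro q
    obtain ⟨z0⟩ := ‹Nonempty ι›
    refine abs_le.mpr ⟨le_ciInf fun z => neg_le_of_abs_le (hgb q z), ?_⟩
    exact (ciInf_le (Set.Finite.bddBelow (Set.finite_range _)) z0).trans
      (le_of_abs_le (hgb q z0))
  have hgle : ∀ q z, c q ≤ g q z := fun q z =>
    ciInf_le (Set.Finite.bddBelow (Set.finite_range _)) z
  -- the Kantorovich set
  set L : Set ℝ := {t : ℝ | ∃ π : Measure (X × Y), IsProbabilityMeasure π ∧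
    π.map Prod.fst = μ ∧ π.map Prod.snd = ν ∧ t = ∫ q, c q ∂π} with hLdef
  have hkant : kant μ ν (fun x y => ⨅ z, (c1 x z + c2 z y)) = sInf L := rfl
  have hLne : L.Nonempty := by
    refine ⟨∫ q, c q ∂(μ.prod ν), μ.prod ν, inferInstance, ?_, ?_, rfl⟩
    · simp [Measure.map_fst_prod, measure_univ]
    · simp [Measure.map_snd_prod, measure_univ]
  have hLbd : BddBelow L := by
    refine ⟨-(M1 + M2), ?_⟩
    rintro t ⟨π, hπ, -, -, rfl⟩
    have := auxSD_integral_ge (μ := π) hcb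
    simpa [measure_univ] using this
  -- nonemptiness and lower bound of the partition value sets
  have hAne : ∀ r : ι → ℝ, (∀ z, 0 ≤ r z) → (∑ z, r z) = 1 →
      ∃ μv : ι → Measure X, (∑ z, μv z) = μ ∧
        (∀ z, μv z Set.univ = ENNReal.ofReal (r z)) := by
    intro r hr0 hr1
    refine ⟨fun z => ENNReal.ofReal (r z) • μ, ?_, fun z => by
      simp [measure_univ]⟩
    rw [← Finset.sum_smul]
    rw [← ENNReal.ofReal_sum_of_nonneg fun z _ => hr0 z, hr1]
    simp
  have hBne : ∀ r : ι → ℝ, (∀ z, 0 ≤ r z) → (∑ z, r z) = 1 →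
      ∃ νv : ι → Measure Y, (∑ z, νv z) = ν ∧
        (∀ z, νv z Set.univ = ENNReal.ofReal (r z)) := by
    intro r hr0 hr1
    refine ⟨fun z => ENNReal.ofReal (r z) • ν, ?_, fun z => by
      simp [measure_univ]⟩
    rw [← Finset.sum_smul]
    rw [← ENNReal.ofReal_sum_of_nonneg fun z _ => hr0 z, hr1]
    simp
  -- mass facts
  have hfinX : ∀ (r : ι → ℝ) (μv : ι → Measure X),
      (∀ z, μv z Set.univ = ENNReal.ofReal (r z)) → ∀ z, IsFiniteMeasure (μv z) :=
    fun r μv h z => ⟨by rw [h z]; exact ENNReal.ofReal_lt_top⟩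
  have hfinY : ∀ (r : ι → ℝ) (νv : ι → Measure Y),
      (∀ z, νv z Set.univ = ENNReal.ofReal (r z)) → ∀ z, IsFiniteMeasure (νv z) :=
    fun r νv h z => ⟨by rw [h z]; exact ENNReal.ofReal_lt_top⟩
  -- lower bounds for partition sums
  have hAlow : ∀ (r : ι → ℝ), (∀ z, 0 ≤ r z) → (∑ z, r z) = 1 →
      ∀ (μv : ι → Measure X), (∀ z, μv z Set.univ = ENNReal.ofReal (r z)) →
      -M1 ≤ ∑ z, ∫ x, c1 x z ∂(μv z) := by
    intro r hr0 hr1 μv hmass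
    have : ∀ z, -(M1 * r z) ≤ ∫ x, c1 x z ∂(μv z) := by
      intro z
      haveI := hfinX r μv hmass z
      have := auxSD_integral_ge (μ := μv z) (f := fun x => c1 x z) (fun x => hM1 x z)
      rwa [hmass z, ENNReal.toReal_ofReal (hr0 z)] at this
    calc -M1 = -(M1 * ∑ z, r z) := by rw [hr1, mul_one]
      _ = ∑ z, -(M1 * r z) := by rw [Finset.mul_sum, Finset.sum_neg_distrib]
      _ ≤ _ := Finset.sum_le_sum fun z _ => this z
  have hBlow : ∀ (r : ι → ℝ), (∀ z, 0 ≤ r z) → (∑ z, r z) = 1 →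
      ∀ (νv : ι → Measure Y), (∀ z, νv z Set.univ = ENNReal.ofReal (r z)) →
      -M2 ≤ ∑ z, ∫ y, c2 z y ∂(νv z) := by
    intro r hr0 hr1 νv hmass
    have : ∀ z, -(M2 * r z) ≤ ∫ y, c2 z y ∂(νv z) := by
      intro z
      haveI := hfinY r νv hmass z
      have := auxSD_integral_ge (μ := νv z) (f := fun y => c2 z y) (fun y => hM2 y z)
      rwa [hmass z, ENNReal.toReal_ofReal (hr0 z)] at this
    calc -M2 = -(M2 * ∑ z, r z) := by rw [hr1, mul_one]
      _ = ∑ z, -(M2 * r z) := by rw [Finset.mul_sum, Finset.sum_neg_distrib]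
      _ ≤ _ := Finset.sum_le_sum fun z _ => this z
  -- core: for any admissible pair of partitions, sInf L ≤ a + b
  have hcore : ∀ (r : ι → ℝ), (∀ z, 0 ≤ r z) → (∑ z, r z) = 1 →
      ∀ (μv : ι → Measure X), (∑ z, μv z) = μ →
        (∀ z, μv z Set.univ = ENNReal.ofReal (r z)) →
      ∀ (νv : ι → Measure Y), (∑ z, νv z) = ν →
        (∀ z, νv z Set.univ = ENNReal.ofReal (r z)) →
      sInf L ≤ (∑ z, ∫ x, c1 x z ∂(μv z)) + (∑ z, ∫ y, c2 z y ∂(νv z)) := by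
    intro r hr0 hr1 μv hμs hμm νv hνs hνm
    have hμf : ∀ z, IsFiniteMeasure (μv z) := hfinX r μv hμm
    have hνf : ∀ z, IsFiniteMeasure (νv z) := hfinY r νv hνm
    set π : Measure (X × Y) :=
      ∑ z, (ENNReal.ofReal (r z))⁻¹ • ((μv z).prod (νv z)) with hπdef
    have hzero : ∀ z, r z = 0 → μv z = 0 ∧ νv z = 0 := by
      intro z hz
      constructor
      · exact Measure.measure_univ_eq_zero.mp (by rw [hμm z, hz, ENNReal.ofReal_zero])
      · exact Measure.measure_univ_eq_zero.mp (by rw [hνm z, hz, ENNReal.ofReal_zero])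
    have hinv : ∀ z, r z ≠ 0 →
        (ENNReal.ofReal (r z))⁻¹ * ENNReal.ofReal (r z) = 1 := fun z hz =>
      ENNReal.inv_mul_cancel (ENNReal.ofReal_pos.mpr ((hr0 z).lt_of_ne (Ne.symm hz))).ne'
        ENNReal.ofReal_ne_top
    have hfst : π.map Prod.fst = μ := by
      rw [hπdef, auxSD_map_sum _ _ measurable_fst, ← hμs]
      refine Finset.sum_congr rfl fun z _ => ?_
      haveI := hμf z; haveI := hνf z
      rw [Measure.map_smul, Measure.map_fst_prod]
      by_cases hz : r z = 0
      · simp [(hzero z hz).1]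
      · rw [hνm z, smul_smul, hinv z hz, one_smul]
    have hsnd : π.map Prod.snd = ν := by
      rw [hπdef, auxSD_map_sum _ _ measurable_snd, ← hνs]
      refine Finset.sum_congr rfl fun z _ => ?_
      haveI := hμf z; haveI := hνf z
      rw [Measure.map_smul, Measure.map_snd_prod]
      by_cases hz : r z = 0
      · simp [(hzero z hz).2]
      · rw [hμm z, smul_smul, hinv z hz, one_smul]
    haveI hπprob : IsProbabilityMeasure π := by
      constructor
      rw [← Set.preimage_univ (f := Prod.fst),
        ← Measure.map_apply measurable_fst MeasurableSet.univ, hfst]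
      exact measure_univ
    have hπz : ∀ z, IsFiniteMeasure ((ENNReal.ofReal (r z))⁻¹ • ((μv z).prod (νv z))) := by
      intro z
      haveI := hμf z; haveI := hνf z
      by_cases hz : r z = 0
      · constructor
        rw [(hzero z hz).1]
        simp
      · constructor
        rw [Measure.smul_apply, ← Set.univ_prod_univ, Measure.prod_prod, hμm z, hνm z,
          smul_eq_mul, ← mul_assoc, hinv z hz, one_mul]
        exact ENNReal.ofReal_lt_top
    have hint : ∫ q, c q ∂π
        = ∑ z, ∫ q, c q ∂((ENNReal.ofReal (r z))⁻¹ • ((μv z).prod (νv z))) := by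
      rw [hπdef]
      exact integral_finset_sum_measure fun z _ => by
        haveI := hπz z; exact auxSD_integrable hcmeas hcb
    have hterm : ∀ z, ∫ q, c q ∂((ENNReal.ofReal (r z))⁻¹ • ((μv z).prod (νv z)))
        ≤ (∫ x, c1 x z ∂(μv z)) + (∫ y, c2 z y ∂(νv z)) := by
      intro z
      haveI h1f : IsFiniteMeasure (μv z) := hμf z
      haveI h2f : IsFiniteMeasure (νv z) := hνf z
      haveI hpf : IsFiniteMeasure ((μv z).prod (νv z)) := Measure.prod.instIsFiniteMeasure (μv z) (νv z)
      by_cases hz : r z = 0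
      · rw [(hzero z hz).1, (hzero z hz).2]
        simp
      · rw [integral_smul_measure]
        have htr : ((ENNReal.ofReal (r z))⁻¹).toReal = (r z)⁻¹ := by
          rw [← ENNReal.ofReal_inv_of_pos ((hr0 z).lt_of_ne (Ne.symm hz)),
            ENNReal.toReal_ofReal (inv_nonneg.mpr (hr0 z))]
        rw [htr]
        have hi1 : Integrable (fun q : X × Y => c1 q.1 z) ((μv z).prod (νv z)) :=
          auxSD_integrable ((hc1 z).measurable.comp measurable_fst) (fun q => hM1 q.1 z)
        have hi2 : Integrable (fun q : X × Y => c2 z q.2) ((μv z).prod (νv z)) :=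
          auxSD_integrable ((hc2 z).measurable.comp measurable_snd) (fun q => hM2 q.2 z)
        have hmono : ∫ q, c q ∂((μv z).prod (νv z)) ≤ ∫ q, g q z ∂((μv z).prod (νv z)) :=
          integral_mono (auxSD_integrable hcmeas hcb) (hi1.add hi2) (fun q => hgle q z)
        have h1 : ∫ q, c1 q.1 z ∂((μv z).prod (νv z)) = r z * ∫ x, c1 x z ∂(μv z) := by
          have h := integral_map (μ := (μv z).prod (νv z)) measurable_fst.aemeasurable
            (f := fun x => c1 x z) ((hc1 z).measurable.aestronglyMeasurable)
          rw [Measure.map_fst_prod, integral_smul_measure, hνm z,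
            ENNReal.toReal_ofReal (hr0 z), smul_eq_mul] at h
          exact h.symm
        have h2 : ∫ q, c2 z q.2 ∂((μv z).prod (νv z)) = r z * ∫ y, c2 z y ∂(νv z) := by
          have h := integral_map (μ := (μv z).prod (νv z)) measurable_snd.aemeasurable
            (f := fun y => c2 z y) ((hc2 z).measurable.aestronglyMeasurable)
          rw [Measure.map_snd_prod, integral_smul_measure, hμm z,
            ENNReal.toReal_ofReal (hr0 z), smul_eq_mul] at h
          exact h.symm
        have hadd : ∫ q, g q z ∂((μv z).prod (νv z))
            = (∫ q, c1 q.1 z ∂((μv z).prod (νv z)))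
              + ∫ q, c2 z q.2 ∂((μv z).prod (νv z)) := integral_add hi1 hi2
        calc (r z)⁻¹ • ∫ q, c q ∂((μv z).prod (νv z))
            ≤ (r z)⁻¹ • ∫ q, g q z ∂((μv z).prod (νv z)) :=
              smul_le_smul_of_nonneg_left hmono (inv_nonneg.mpr (hr0 z))
          _ = _ := by
              rw [hadd, h1, h2, smul_eq_mul, mul_add, ← mul_assoc, ← mul_assoc,
                inv_mul_cancel₀ hz, one_mul, one_mul]
    have hle : ∫ q, c q ∂π
        ≤ (∑ z, ∫ x, c1 x z ∂(μv z)) + (∑ z, ∫ y, c2 z y ∂(νv z)) := by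
      rw [hint, ← Finset.sum_add_distrib]
      exact Finset.sum_le_sum fun z _ => hterm z
    exact (csInf_le hLbd ⟨π, hπprob, hfst, hsnd, rfl⟩).trans hle
  -- core2 : every coupling integral dominates an element of S
  rw [hkant]
  apply le_antisymm
  · -- sInf L ≤ sInf S
    refine le_csInf ?_ ?_
    · obtain ⟨z0⟩ := ‹Nonempty ι›
      classical
      refine ⟨_, fun z => if z = z0 then (1:ℝ) else 0, fun z => by positivity, by simp, rfl⟩
    · rintro t ⟨r, hr0, hr1, rfl⟩
      obtain ⟨μv0, hμv0s, hμv0m⟩ := hAne r hr0 hr1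
      obtain ⟨νv0, hνv0s, hνv0m⟩ := hBne r hr0 hr1
      set A := {a : ℝ | ∃ μv : ι → Measure X, (∑ z, μv z) = μ ∧
        (∀ z, μv z Set.univ = ENNReal.ofReal (r z)) ∧
        a = ∑ z, ∫ x, c1 x z ∂(μv z)} with hAdef
      set B := {b : ℝ | ∃ νv : ι → Measure Y, (∑ z, νv z) = ν ∧
        (∀ z, νv z Set.univ = ENNReal.ofReal (r z)) ∧
        b = ∑ z, ∫ y, c2 z y ∂(νv z)} with hBdef
      have hAne' : A.Nonempty := ⟨_, μv0, hμv0s, hμv0m, rfl⟩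
      have hBne' : B.Nonempty := ⟨_, νv0, hνv0s, hνv0m, rfl⟩
      have hab : ∀ a ∈ A, ∀ b ∈ B, sInf L ≤ a + b := by
        rintro a ⟨μv, h1, h2, rfl⟩ b ⟨νv, h3, h4, rfl⟩
        exact hcore r hr0 hr1 μv h1 h2 νv h3 h4
      have h1 : ∀ b ∈ B, sInf L - b ≤ sInf A := by
        intro b hb
        refine le_csInf hAne' fun a ha => ?_
        linarith [hab a ha b hb]
      have h2 : sInf L - sInf A ≤ sInf B := by
        refine le_csInf hBne' fun b hb => ?_
        linarith [h1 b hb]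
      linarith
  · -- sInf S ≤ sInf L
    have hSbd : BddBelow {t : ℝ | ∃ r : ι → ℝ, (∀ z, 0 ≤ r z) ∧ (∑ z, r z) = 1 ∧
          t = sInf {a : ℝ | ∃ μv : ι → Measure X,
                  (∑ z, μv z) = μ ∧ (∀ z, μv z Set.univ = ENNReal.ofReal (r z)) ∧
                  a = ∑ z, ∫ x, c1 x z ∂(μv z)}
            + sInf {b : ℝ | ∃ νv : ι → Measure Y,
                  (∑ z, νv z) = ν ∧ (∀ z, νv z Set.univ = ENNReal.ofReal (r z)) ∧
                  b = ∑ z, ∫ y, c2 z y ∂(νv z)}} := by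
      refine ⟨-M1 + -M2, ?_⟩
      rintro t ⟨r, hr0, hr1, rfl⟩
      obtain ⟨μv0, hs0, hm0⟩ := hAne r hr0 hr1
      obtain ⟨νv0, hs0', hm0'⟩ := hBne r hr0 hr1
      have h1 : -M1 ≤ sInf {a : ℝ | ∃ μv : ι → Measure X,
          (∑ z, μv z) = μ ∧ (∀ z, μv z Set.univ = ENNReal.ofReal (r z)) ∧
          a = ∑ z, ∫ x, c1 x z ∂(μv z)} := by
        refine le_csInf ⟨_, μv0, hs0, hm0, rfl⟩ ?_
        rintro a ⟨μv', h1', h2', rfl⟩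
        exact hAlow r hr0 hr1 μv' h2'
      have h2 : -M2 ≤ sInf {b : ℝ | ∃ νv : ι → Measure Y,
          (∑ z, νv z) = ν ∧ (∀ z, νv z Set.univ = ENNReal.ofReal (r z)) ∧
          b = ∑ z, ∫ y, c2 z y ∂(νv z)} := by
        refine le_csInf ⟨_, νv0, hs0', hm0', rfl⟩ ?_
        rintro b ⟨νv', h1', h2', rfl⟩
        exact hBlow r hr0 hr1 νv' h2'
      exact add_le_add h1 h2
    refine le_csInf hLne ?_
    rintro t ⟨π, hπ, hπ1, hπ2, rfl⟩
    haveI := hπ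
    set e := Fintype.equivFin ι with hedef
    set P : ι → Set (X × Y) := fun z =>
      {q | g q z = c q} ∩ ⋂ (w : ι) (_ : e w < e z), {q | g q w = c q}ᶜ with hPdef
    have hPmeas : ∀ z, MeasurableSet (P z) := by
      intro z
      refine (measurableSet_eq_fun (hgmeas z)
        hcmeas).inter ?_
      exact MeasurableSet.iInter fun w => MeasurableSet.iInter fun _ =>
        (measurableSet_eq_fun (hgmeas w)
          hcmeas).compl
    have hdis : ((Finset.univ : Finset ι) : Set ι).PairwiseDisjoint P := by
      intro z _ w _ hzw
      have hee : e z ≠ e w := fun h => hzw (e.injective h)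
      rcases lt_or_gt_of_ne hee with h | h
      · refine Set.disjoint_left.mpr fun q hqz hqw => ?_
        exact (Set.mem_iInter.mp (Set.mem_iInter.mp hqw.2 z) h) hqz.1
      · refine Set.disjoint_left.mpr fun q hqz hqw => ?_
        exact (Set.mem_iInter.mp (Set.mem_iInter.mp hqz.2 w) h) hqw.1
    have hcover : ⋃ z, P z = Set.univ := by
      refine Set.eq_univ_of_forall fun q => ?_
      have hne : (Finset.univ.filter (fun z => g q z = c q)).Nonempty := by
        obtain ⟨z0, hz0⟩ := Finite.exists_min (g q)
        exact ⟨z0, Finset.mem_filter.mpr ⟨Finset.mem_univ _,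
          le_antisymm (le_ciInf hz0) (hgle q z0)⟩⟩
      obtain ⟨z, hzmem, hzmin⟩ := Finset.exists_min_image _ e hne
      have hz' : g q z = c q := (Finset.mem_filter.mp hzmem).2
      refine Set.mem_iUnion.mpr ⟨z, hz', ?_⟩
      refine Set.mem_iInter.mpr fun w => Set.mem_iInter.mpr fun hw => fun hgw => ?_
      exact absurd hw (not_lt.mpr (hzmin w (Finset.mem_filter.mpr
        ⟨Finset.mem_univ _, hgw⟩)))
    have hPtop : ∀ z, π (P z) ≠ ⊤ := fun z => measure_ne_top π _
    set r : ι → ℝ := fun z => (π (P z)).toReal with hrdef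
    have hr0 : ∀ z, 0 ≤ r z := fun z => ENNReal.toReal_nonneg
    have hbigU : (⋃ z ∈ (Finset.univ : Finset ι), P z) = Set.univ := by
      simpa only [Finset.mem_univ, Set.iUnion_true] using hcover
    have hsumP : ∑ z, π (P z) = 1 := by
      have h := measure_biUnion_finset (μ := π) hdis (fun z _ => hPmeas z)
      rw [hbigU, measure_univ] at h
      exact h.symm
    have hr1 : ∑ z, r z = 1 := by
      rw [hrdef]
      rw [← ENNReal.toReal_sum (fun z _ => hPtop z), hsumP, ENNReal.toReal_one]
    set μv : ι → Measure X := fun z => (π.restrict (P z)).map Prod.fst with hμvdef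
    set νv : ι → Measure Y := fun z => (π.restrict (P z)).map Prod.snd with hνvdef
    have hres : (∑ z, π.restrict (P z)) = π := by
      ext s hs
      rw [Measure.finset_sum_apply]
      simp only [Measure.restrict_apply hs]
      have hd' : ((Finset.univ : Finset ι) : Set ι).PairwiseDisjoint
          (fun z => s ∩ P z) := fun z hz w hw hzw =>
        (hdis hz hw hzw).mono Set.inter_subset_right Set.inter_subset_right
      rw [← measure_biUnion_finset hd' (fun z _ => hs.inter (hPmeas z))]
      congr 1
      simp only [Finset.mem_univ, Set.iUnion_true]
      rw [← Set.inter_iUnion, hcover, Set.inter_univ]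
    have hμmass : ∀ z, μv z Set.univ = ENNReal.ofReal (r z) := by
      intro z
      rw [hμvdef]
      rw [Measure.map_apply measurable_fst MeasurableSet.univ, Set.preimage_univ,
        Measure.restrict_apply_univ, hrdef, ENNReal.ofReal_toReal (hPtop z)]
    have hνmass : ∀ z, νv z Set.univ = ENNReal.ofReal (r z) := by
      intro z
      rw [hνvdef]
      rw [Measure.map_apply measurable_snd MeasurableSet.univ, Set.preimage_univ,
        Measure.restrict_apply_univ, hrdef, ENNReal.ofReal_toReal (hPtop z)]
    have hμsum : ∑ z, μv z = μ := by
      rw [hμvdef, ← auxSD_map_sum Finset.univ (fun z => π.restrict (P z))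
        measurable_fst, hres, hπ1]
    have hνsum : ∑ z, νv z = ν := by
      rw [hνvdef, ← auxSD_map_sum Finset.univ (fun z => π.restrict (P z))
        measurable_snd, hres, hπ2]
    have hsplit : ∫ q, c q ∂π = ∑ z, ∫ q, c q ∂(π.restrict (P z)) := by
      conv_lhs => rw [← hres]
      exact integral_finset_sum_measure fun z _ => auxSD_integrable hcmeas hcb
    have hzint : ∀ z, ∫ q, c q ∂(π.restrict (P z))
        = (∫ x, c1 x z ∂(μv z)) + ∫ y, c2 z y ∂(νv z) := by
      intro z
      have hi1 : Integrable (fun q : X × Y => c1 q.1 z) (π.restrict (P z)) :=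
        auxSD_integrable ((hc1 z).measurable.comp measurable_fst) (fun q => hM1 q.1 z)
      have hi2 : Integrable (fun q : X × Y => c2 z q.2) (π.restrict (P z)) :=
        auxSD_integrable ((hc2 z).measurable.comp measurable_snd) (fun q => hM2 q.2 z)
      have he : ∫ q in P z, c q ∂π = ∫ q in P z, g q z ∂π :=
        setIntegral_congr_fun (hPmeas z) fun q hq => hq.1.symm
      have h1 : ∫ x, c1 x z ∂(μv z) = ∫ q, c1 q.1 z ∂(π.restrict (P z)) := by
        rw [hμvdef]
        exact integral_map measurable_fst.aemeasurable
          ((hc1 z).measurable.aestronglyMeasurable)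
      have h2 : ∫ y, c2 z y ∂(νv z) = ∫ q, c2 z q.2 ∂(π.restrict (P z)) := by
        rw [hνvdef]
        exact integral_map measurable_snd.aemeasurable
          ((hc2 z).measurable.aestronglyMeasurable)
      rw [h1, h2, he]
      exact integral_add hi1 hi2
    have hAbd : BddBelow {a : ℝ | ∃ μv' : ι → Measure X,
        (∑ z, μv' z) = μ ∧ (∀ z, μv' z Set.univ = ENNReal.ofReal (r z)) ∧
        a = ∑ z, ∫ x, c1 x z ∂(μv' z)} := by
      refine ⟨-M1, ?_⟩
      rintro a ⟨μv', h1', h2', rfl⟩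
      exact hAlow r hr0 hr1 μv' h2'
    have hBbd : BddBelow {b : ℝ | ∃ νv' : ι → Measure Y,
        (∑ z, νv' z) = ν ∧ (∀ z, νv' z Set.univ = ENNReal.ofReal (r z)) ∧
        b = ∑ z, ∫ y, c2 z y ∂(νv' z)} := by
      refine ⟨-M2, ?_⟩
      rintro b ⟨νv', h1', h2', rfl⟩
      exact hBlow r hr0 hr1 νv' h2'
    have key : sInf {a : ℝ | ∃ μv' : ι → Measure X,
          (∑ z, μv' z) = μ ∧ (∀ z, μv' z Set.univ = ENNReal.ofReal (r z)) ∧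
          a = ∑ z, ∫ x, c1 x z ∂(μv' z)}
        + sInf {b : ℝ | ∃ νv' : ι → Measure Y,
          (∑ z, νv' z) = ν ∧ (∀ z, νv' z Set.univ = ENNReal.ofReal (r z)) ∧
          b = ∑ z, ∫ y, c2 z y ∂(νv' z)}
        ≤ ∫ q, c q ∂π := by
      have ha : sInf {a : ℝ | ∃ μv' : ι → Measure X,
          (∑ z, μv' z) = μ ∧ (∀ z, μv' z Set.univ = ENNReal.ofReal (r z)) ∧
          a = ∑ z, ∫ x, c1 x z ∂(μv' z)} ≤ ∑ z, ∫ x, c1 x z ∂(μv z) :=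
        csInf_le hAbd ⟨μv, hμsum, hμmass, rfl⟩
      have hb : sInf {b : ℝ | ∃ νv' : ι → Measure Y,
          (∑ z, νv' z) = ν ∧ (∀ z, νv' z Set.univ = ENNReal.ofReal (r z)) ∧
          b = ∑ z, ∫ y, c2 z y ∂(νv' z)} ≤ ∑ z, ∫ y, c2 z y ∂(νv z) :=
        csInf_le hBbd ⟨νv, hνsum, hνmass, rfl⟩
      have heq : ∫ q, c q ∂π
          = (∑ z, ∫ x, c1 x z ∂(μv z)) + ∑ z, ∫ y, c2 z y ∂(νv z) := by
        rw [hsplit, ← Finset.sum_add_distrib]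
        exact Finset.sum_congr rfl fun z _ => hzint z
      rw [heq]
      exact add_le_add ha hb
    exact (csInf_le hSbd ⟨r, hr0, hr1, rfl⟩).trans key
end

section
/- Under Assumption (a), the function Ξ_μ : ℝ^{Z_m} → ℝ is continuously differentiable, and for every p ∈ ℝ^{Z_m} and every z ∈ Z_m its partial derivative is ∂Ξ_μ/∂p_z (p) = μ(A_z(p)). -/
/-!
For each `x`, `p ↦ minCost c p x` is a minimum of finitely many affine functions, hence
1-Lipschitz, and near any `p` at which the minimum is attained at a single index `z` it equals
`c x z + p z`, with derivative the coordinate projection at `z`. Assumption (a) makes the set of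
`x` with a tie a null set for every `p`, so differentiation under the integral (dominated by the
Lipschitz constant) gives the derivative `∫ x, minCostGrad c p x ∂μ`, whose `z`-th coordinate is
`μ (argminSet c p z)`. Off the tie set `minCostGrad c · x` is locally constant, so dominated
convergence makes the derivative continuous.
-/

open MeasureTheory Set Filter Topology

section MinCost

variable {X ι : Type*} [Fintype ι] (c : X → ι → ℝ)

noncomputable def minCost (p : ι → ℝ) (x : X) : ℝ := ⨅ z, c x z + p z

def argminSet (p : ι → ℝ) (z : ι) : Set X := {x | c x z + p z = minCost c p x}

def tieSet (p : ι → ℝ) : Set X :=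
  ⋃ (z) (z') (_ : z ≠ z'), argminSet c p z ∩ argminSet c p z'

noncomputable def minCostGrad (p : ι → ℝ) (x : X) : (ι → ℝ) →L[ℝ] ℝ :=
  ∑ w, (argminSet c p w).indicator (1 : X → ℝ) x •
    ContinuousLinearMap.proj (R := ℝ) (φ := fun _ : ι => ℝ) w

variable {c}

theorem minCost_le (p : ι → ℝ) (x : X) (z : ι) : minCost c p x ≤ c x z + p z :=
  ciInf_le (Finite.bddBelow_range _) z

theorem exists_mem_argminSet [Nonempty ι] (p : ι → ℝ) (x : X) : ∃ z, x ∈ argminSet c p z :=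
  exists_eq_ciInf_of_finite

theorem lipschitzWith_minCost [Nonempty ι] (x : X) : LipschitzWith 1 fun p => minCost c p x := by
  refine LipschitzWith.of_le_add_mul 1 fun p q => ?_
  rw [NNReal.coe_one, one_mul, ← sub_le_iff_le_add]
  refine le_ciInf fun z => ?_
  calc minCost c p x - dist p q ≤ c x z + p z - dist (p z) (q z) :=
        sub_le_sub (minCost_le p x z) (dist_le_pi_dist p q z)
    _ ≤ c x z + q z := by linarith [le_abs_self (p z - q z), Real.dist_eq (p z) (q z)]

theorem lt_of_notMem_tieSet {p : ι → ℝ} {x : X} {z₀ z : ι} (hx : x ∉ tieSet c p)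
    (h₀ : x ∈ argminSet c p z₀) (hz : z ≠ z₀) : c x z₀ + p z₀ < c x z + p z := by
  refine (h₀.trans_le (minCost_le p x z)).lt_of_ne fun h => hx ?_
  simp only [tieSet, mem_iUnion]
  exact ⟨z, z₀, hz, h.symm.trans h₀, h₀⟩

theorem mem_argminSet_iff_of_forall_lt {q : ι → ℝ} {x : X} {z₀ : ι}
    (h : ∀ z ≠ z₀, c x z₀ + q z₀ < c x z + q z) (z : ι) : x ∈ argminSet c q z ↔ z = z₀ := by
  have : Nonempty ι := ⟨z₀⟩
  have hmin : minCost c q x = c x z₀ + q z₀ := by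
    refine le_antisymm (minCost_le q x z₀) (le_ciInf fun z => ?_)
    rcases eq_or_ne z z₀ with rfl | hz
    exacts [le_rfl, (h z hz).le]
  refine ⟨fun hz => by_contra fun hne => (h z hne).ne' (hz.trans hmin), ?_⟩
  rintro rfl
  exact hmin.symm

theorem eventually_mem_argminSet_iff {p : ι → ℝ} {x : X} {z₀ : ι} (hx : x ∉ tieSet c p)
    (h₀ : x ∈ argminSet c p z₀) : ∀ᶠ q in 𝓝 p, ∀ z, x ∈ argminSet c q z ↔ z = z₀ := by
  have hlt : ∀ z ≠ z₀, ∀ᶠ q in 𝓝 p, c x z₀ + q z₀ < c x z + q z := fun z hz =>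
    (continuous_const.add (continuous_apply z₀)).continuousAt.eventually_lt
      (continuous_const.add (continuous_apply z)).continuousAt (lt_of_notMem_tieSet hx h₀ hz)
  filter_upwards [eventually_all.2 fun z => eventually_imp_distrib_left.2 (hlt z)] with q hq
  exact mem_argminSet_iff_of_forall_lt hq

theorem minCostGrad_eq_proj {p : ι → ℝ} {x : X} {z₀ : ι}
    (h : ∀ z, x ∈ argminSet c p z ↔ z = z₀) :
    minCostGrad c p x = ContinuousLinearMap.proj z₀ := by
  rw [minCostGrad, Finset.sum_eq_single_of_mem z₀ (Finset.mem_univ _)]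
  · rw [indicator_of_mem ((h z₀).2 rfl), Pi.one_apply, one_smul]
  · intro w _ hw
    rw [indicator_of_notMem (mt (h w).1 hw), zero_smul]

theorem hasFDerivAt_minCost {p : ι → ℝ} {x : X} (hx : x ∉ tieSet c p) [Nonempty ι] :
    HasFDerivAt (fun q => minCost c q x) (minCostGrad c p x) p := by
  obtain ⟨z₀, h₀⟩ := exists_mem_argminSet p x
  have hloc : (fun q => c x z₀ + q z₀) =ᶠ[𝓝 p] fun q => minCost c q x := by
    filter_upwards [eventually_mem_argminSet_iff hx h₀] with q hq
    exact (hq z₀).2 rfl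
  have hlin : HasFDerivAt (fun q : ι → ℝ => c x z₀ + q z₀) (ContinuousLinearMap.proj z₀) p :=
    (ContinuousLinearMap.proj (R := ℝ) (φ := fun _ : ι => ℝ) z₀).hasFDerivAt.const_add _
  rw [minCostGrad_eq_proj (eventually_mem_argminSet_iff hx h₀).self_of_nhds]
  exact hlin.congr_of_eventuallyEq hloc.symm

theorem continuousAt_minCostGrad {p : ι → ℝ} {x : X} (hx : x ∉ tieSet c p) [Nonempty ι] :
    ContinuousAt (fun q => minCostGrad c q x) p := by
  obtain ⟨z₀, h₀⟩ := exists_mem_argminSet p x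
  have hloc : (fun q => minCostGrad c q x) =ᶠ[𝓝 p] fun _ => ContinuousLinearMap.proj z₀ :=
    (eventually_mem_argminSet_iff hx h₀).mono fun q hq => minCostGrad_eq_proj hq
  rw [ContinuousAt, hloc.eq_of_nhds]
  exact tendsto_const_nhds.congr' hloc.symm

theorem norm_minCostGrad_le (p : ι → ℝ) (x : X) : ‖minCostGrad c p x‖ ≤ Fintype.card ι := by
  refine ContinuousLinearMap.opNorm_le_bound _ (Nat.cast_nonneg _) fun v => ?_
  simp only [minCostGrad, sum_apply, smul_apply,
    ContinuousLinearMap.proj_apply, smul_eq_mul]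
  calc ‖∑ w, (argminSet c p w).indicator 1 x * v w‖
      ≤ ∑ w : ι, ‖v‖ := by
        refine (norm_sum_le _ _).trans (Finset.sum_le_sum fun w _ => ?_)
        rw [norm_mul]
        refine (mul_le_of_le_one_left (norm_nonneg _) ?_).trans (norm_le_pi_norm v w)
        by_cases hw : x ∈ argminSet c p w <;> simp [hw]
    _ = Fintype.card ι * ‖v‖ := by simp

theorem minCostGrad_apply_single [DecidableEq ι] (p : ι → ℝ) (x : X) (z : ι) :
    minCostGrad c p x (Pi.single z 1) = (argminSet c p z).indicator 1 x := by
  simp [minCostGrad, Pi.single_apply]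

variable [MeasurableSpace X] (μ : Measure X)

theorem measurable_minCost (hc : ∀ z, Measurable fun x => c x z) (p : ι → ℝ) :
    Measurable (minCost c p) :=
  Measurable.iInf fun z => (hc z).add_const (p z)

theorem measurableSet_argminSet (hc : ∀ z, Measurable fun x => c x z) (p : ι → ℝ) (z : ι) :
    MeasurableSet (argminSet c p z) :=
  measurableSet_eq_fun ((hc z).add_const (p z)) (measurable_minCost hc p)

theorem stronglyMeasurable_minCostGrad (hc : ∀ z, Measurable fun x => c x z) (p : ι → ℝ) :
    StronglyMeasurable (minCostGrad c p) :=
  Finset.stronglyMeasurable_fun_sum _ fun w _ =>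
    (stronglyMeasurable_one.indicator (measurableSet_argminSet hc p w)).smul_const _

theorem measure_tieSet
    (hlevel : ∀ (t : ℝ) (z z' : ι), z ≠ z' → μ {x | c x z - c x z' = t} = 0) (p : ι → ℝ) :
    μ (tieSet c p) = 0 := by
  refine measure_iUnion_null fun z => measure_iUnion_null fun z' => measure_iUnion_null fun hz =>
    measure_mono_null ?_ (hlevel (p z' - p z) z z' hz)
  rintro x ⟨hxz, hxz'⟩
  simp only [argminSet, mem_ofPred_eq] at hxz hxz' ⊢
  linarith

variable [IsFiniteMeasure μ]

theorem integrable_minCost [Nonempty ι] (hc : ∀ z, Measurable fun x => c x z)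
    (hci : ∀ z, Integrable (fun x => c x z) μ) (p : ι → ℝ) :
    Integrable (minCost c p) μ := by
  refine (integrable_finsetSum Finset.univ fun z _ => ((hci z).add (integrable_const (p z))).norm).mono'
    (measurable_minCost hc p).aestronglyMeasurable (ae_of_all _ fun x => ?_)
  obtain ⟨z₀, h₀⟩ := exists_mem_argminSet p x
  rw [← show c x z₀ + p z₀ = minCost c p x from h₀]
  exact Finset.single_le_sum (f := fun z => ‖c x z + p z‖) (fun z _ => norm_nonneg _)
    (Finset.mem_univ z₀)

theorem integrable_minCostGrad (hc : ∀ z, Measurable fun x => c x z) (p : ι → ℝ) :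
    Integrable (minCostGrad c p) μ :=
  .of_bound (stronglyMeasurable_minCostGrad hc p).aestronglyMeasurable _
    (ae_of_all _ (norm_minCostGrad_le p))

theorem integral_minCostGrad_apply_single [DecidableEq ι] (hc : ∀ z, Measurable fun x => c x z)
    (p : ι → ℝ) (z : ι) : (∫ x, minCostGrad c p x ∂μ) (Pi.single z 1) = μ.real (argminSet c p z) := by
  simp only [ContinuousLinearMap.integral_apply (integrable_minCostGrad μ hc p),
    minCostGrad_apply_single]
  exact integral_indicator_one (measurableSet_argminSet hc p z)

variable [Nonempty ι] (hc : ∀ z, Measurable fun x => c x z)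
  (hlevel : ∀ (t : ℝ) (z z' : ι), z ≠ z' → μ {x | c x z - c x z' = t} = 0)
include hc hlevel

theorem hasFDerivAt_integral_minCost (hci : ∀ z, Integrable (fun x => c x z) μ) (p : ι → ℝ) :
    HasFDerivAt (fun q => ∫ x, minCost c q x ∂μ) (∫ x, minCostGrad c p x ∂μ) p := by
  refine (hasFDerivAt_integral_of_dominated_loc_of_lip (bound := fun _ => 1) univ_mem
    (.of_forall fun q => (measurable_minCost hc q).aestronglyMeasurable)
    (integrable_minCost μ hc hci p) (stronglyMeasurable_minCostGrad hc p).aestronglyMeasurable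
    (ae_of_all _ fun x => ?_) (integrable_const _) ?_).2
  · simpa using lipschitzWith_minCost (c := c) x
  · filter_upwards [measure_eq_zero_iff_ae_notMem.1 (measure_tieSet μ hlevel p)] with x hx
    exact hasFDerivAt_minCost hx

theorem continuous_integral_minCostGrad :
    Continuous fun p => ∫ x, minCostGrad c p x ∂μ :=
  continuous_iff_continuousAt.2 fun p =>
    tendsto_integral_filter_of_dominated_convergence (fun _ => (Fintype.card ι : ℝ))
      (.of_forall fun q => (stronglyMeasurable_minCostGrad hc q).aestronglyMeasurable)
      (.of_forall fun q => ae_of_all _ (norm_minCostGrad_le q)) (integrable_const _)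
      (by filter_upwards [measure_eq_zero_iff_ae_notMem.1 (measure_tieSet μ hlevel p)]
            with x hx using continuousAt_minCostGrad hx)

end MinCost

theorem stmt_6_general
    {X : Type*} [TopologicalSpace X] [MeasurableSpace X] [BorelSpace X]
    {ι : Type*} [Fintype ι] [Nonempty ι] [DecidableEq ι]
    (μ : Measure X) [IsProbabilityMeasure μ]
    (c1 : X → ι → ℝ)
    (hc1 : ∀ z, Continuous fun x => c1 x z) (hb1 : ∀ z, ∃ M, ∀ x, |c1 x z| ≤ M)
    (hlevel : ∀ (t : ℝ) (z z' : ι), z ≠ z' → μ {x | c1 x z - c1 x z' = t} = 0) :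
    ContDiff ℝ 1 (fun p : ι → ℝ => ∫ x, (⨅ z, c1 x z + p z) ∂μ) ∧
    ∀ (p : ι → ℝ) (z : ι),
      fderiv ℝ (fun q : ι → ℝ => ∫ x, (⨅ w, c1 x w + q w) ∂μ) p (Pi.single z 1)
        = (μ {x : X | c1 x z + p z = ⨅ w, (c1 x w + p w)}).toReal := by
  have hc (z : ι) : Measurable fun x => c1 x z := (hc1 z).measurable
  have hci (z : ι) : Integrable (fun x => c1 x z) μ := by
    obtain ⟨M, hM⟩ := hb1 z
    exact .of_bound (hc z).aestronglyMeasurable M (ae_of_all _ hM)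
  have hderiv (p : ι → ℝ) : HasFDerivAt (fun q : ι → ℝ => ∫ x, (⨅ w, c1 x w + q w) ∂μ)
      (∫ x, minCostGrad c1 p x ∂μ) p :=
    hasFDerivAt_integral_minCost μ hc hlevel hci p
  refine ⟨contDiff_one_iff_fderiv.2 ⟨fun p => (hderiv p).differentiableAt, ?_⟩, fun p z => ?_⟩
  · rw [funext fun p => (hderiv p).fderiv]
    exact continuous_integral_minCostGrad μ hc hlevel
  · rw [(hderiv p).fderiv]
    exact integral_minCostGrad_apply_single μ hc p z

/-- Under Assumption (a), `Ξ_μ` is continuously differentiable on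
`ℝ^{Z_m}` and `∂Ξ_μ/∂p_z (p) = μ(A_z(p))`. -/
theorem stmt_6
    {X : Type*} [TopologicalSpace X] [PolishSpace X] [MeasurableSpace X] [BorelSpace X]
    {ι : Type*} [Fintype ι] [Nonempty ι] [DecidableEq ι]
    (μ : Measure X) [IsProbabilityMeasure μ]
    (c1 : X → ι → ℝ)
    (hc1 : ∀ z, Continuous fun x => c1 x z) (hb1 : ∀ z, ∃ M, ∀ x, |c1 x z| ≤ M)
    (hatomless : ∀ x : X, μ {x} = 0)
    (hlevel : ∀ (t : ℝ) (z z' : ι), z ≠ z' → μ {x | c1 x z - c1 x z' = t} = 0) :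
    ContDiff ℝ 1 (fun p : ι → ℝ => ∫ x, (⨅ z, c1 x z + p z) ∂μ) ∧
    ∀ (p : ι → ℝ) (z : ι),
      fderiv ℝ (fun q : ι → ℝ => ∫ x, (⨅ w, c1 x w + q w) ∂μ) p (Pi.single z 1)
        = (μ {x : X | c1 x z + p z = ⨅ w, (c1 x w + p w)}).toReal :=
  stmt_6_general μ c1 hc1 hb1 hlevel
end

section
/- Under Assumption (a), for every r ∈ Σ_m the concave function p ↦ Ξ_μ(p) − Σ_{z∈Z_m} p_z r_z attains its supremum: there exists p_0 ∈ ℝ^{Z_m} with Ξ_μ(p_0) − Σ_z p_{0,z} r_z ≥ Ξ_μ(p) − Σ_z p_z r_z for all p ∈ ℝ^{Z_m}. -/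
open MeasureTheory

/-!
Adding a constant to `p` shifts `Ξ_μ` and `∑ p_z r_z` by the same amount, so one may normalise
`min_z p_z = 0`. If `|c¹| ≤ B`, an index with `p_z ≥ 2B` never realises the minimum defining
`ξ¹(p, x)`, so truncating `p` at `2B` leaves `Ξ_μ(p)` unchanged while `∑ p_z r_z` can only drop.
The supremum is therefore a supremum over the cube `[0, 2B]^{Z_m}`, where the objective, being
`1`-Lipschitz, attains it.
-/

section FiniteInf

variable {ι : Type*} [Fintype ι] [Nonempty ι]

theorem ciInf_add_le_ciInf_add_dist (f p q : ι → ℝ) :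
    ⨅ z, f z + p z ≤ (⨅ z, f z + q z) + dist p q := by
  obtain ⟨z, hz⟩ := exists_eq_ciInf_of_finite (f := fun z => f z + q z)
  have hpq : p z - q z ≤ dist p q :=
    (le_abs_self _).trans ((Real.dist_eq _ _).symm.trans_le (dist_le_pi_dist p q z))
  calc ⨅ z, f z + p z ≤ f z + p z := ciInf_le (Set.finite_range _).bddBelow z
    _ ≤ f z + q z + dist p q := by linarith
    _ = (⨅ z, f z + q z) + dist p q := by rw [hz]

theorem ciInf_add_sub_const (f p : ι → ℝ) (t : ℝ) :
    ⨅ z, f z + (p z - t) = (⨅ z, f z + p z) - t := by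
  simp_rw [← add_sub_assoc]
  exact ((OrderIso.subRight t).map_ciInf (Set.finite_range _).bddBelow).symm

theorem ciInf_add_min_const {f p : ι → ℝ} {K : ℝ} {z₀ : ι} (h : ∀ z, f z₀ + p z₀ ≤ f z + K) :
    ⨅ z, f z + min (p z) K = ⨅ z, f z + p z := by
  have hinf : ∀ y, ⨅ z, f z + p z ≤ f y + p y := ciInf_le (Set.finite_range _).bddBelow
  refine le_antisymm (ciInf_mono (Set.finite_range _).bddBelow fun z => ?_) (le_ciInf fun z => ?_)
  · gcongr
    exact min_le_left _ _
  rcases le_total (p z) K with hz | hz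
  · rw [min_eq_left hz]; exact hinf z
  · rw [min_eq_right hz]; exact (hinf z₀).trans (h z)

theorem abs_ciInf_le {g : ι → ℝ} {C : ℝ} (h : ∀ z, |g z| ≤ C) : |⨅ z, g z| ≤ C := by
  obtain ⟨z, hz⟩ := exists_eq_ciInf_of_finite (f := g)
  exact hz ▸ h z

end FiniteInf

theorem exists_forall_le_of_forall_exists_mem_le {α β : Type*} [TopologicalSpace α] [Nonempty α]
    [LinearOrder β] [TopologicalSpace β] [ClosedIciTopology β] {K : Set α} {F : α → β}
    (hK : IsCompact K) (hF : ContinuousOn F K) (hdom : ∀ p, ∃ q ∈ K, F p ≤ F q) :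
    ∃ p₀, ∀ p, F p ≤ F p₀ := by
  obtain ⟨q, hqK, -⟩ := hdom (Classical.arbitrary α)
  obtain ⟨p₀, -, hp₀⟩ := hK.exists_isMaxOn ⟨q, hqK⟩ hF
  refine ⟨p₀, fun p => ?_⟩
  obtain ⟨q, hqK, hpq⟩ := hdom p
  exact hpq.trans (hp₀ hqK)

section DualObjective

variable {X ι : Type*} [MeasurableSpace X] [Fintype ι]

noncomputable def dualObjective (μ : Measure X) (c : X → ι → ℝ) (r p : ι → ℝ) : ℝ :=
  (∫ x, ⨅ z, c x z + p z ∂μ) - ∑ z, p z * r z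

variable [Nonempty ι] {μ : Measure X} {c : X → ι → ℝ} {B : ℝ}

theorem integrable_ciInf_add [IsFiniteMeasure μ] (hc : ∀ z, Measurable fun x => c x z)
    (hB : ∀ x z, |c x z| ≤ B) (p : ι → ℝ) : Integrable (fun x => ⨅ z, c x z + p z) μ := by
  refine Integrable.of_bound (Measurable.iInf fun z => (hc z).add_const _).aestronglyMeasurable
    (B + ‖p‖) (Filter.Eventually.of_forall fun x => abs_ciInf_le fun z => ?_)
  calc |c x z + p z| ≤ |c x z| + ‖p z‖ := abs_add_le _ _
    _ ≤ B + ‖p‖ := add_le_add (hB x z) (norm_le_pi_norm p z)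

theorem integral_ciInf_add_le_add_dist [IsProbabilityMeasure μ]
    (hc : ∀ z, Measurable fun x => c x z) (hB : ∀ x z, |c x z| ≤ B) (p q : ι → ℝ) :
    ∫ x, ⨅ z, c x z + p z ∂μ ≤ (∫ x, ⨅ z, c x z + q z ∂μ) + dist p q := by
  have hq := integrable_ciInf_add (μ := μ) hc hB q
  calc ∫ x, ⨅ z, c x z + p z ∂μ ≤ ∫ x, ((⨅ z, c x z + q z) + dist p q) ∂μ :=
        integral_mono (integrable_ciInf_add hc hB p) (hq.add (integrable_const _))
          fun x => ciInf_add_le_ciInf_add_dist _ p q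
    _ = (∫ x, ⨅ z, c x z + q z ∂μ) + dist p q := by
        rw [integral_add hq (integrable_const _), integral_const, probReal_univ, one_smul]

theorem continuous_dualObjective [IsProbabilityMeasure μ] (hc : ∀ z, Measurable fun x => c x z)
    (hB : ∀ x z, |c x z| ≤ B) (r : ι → ℝ) : Continuous (dualObjective μ c r) :=
  (LipschitzWith.of_le_add (integral_ciInf_add_le_add_dist hc hB)).continuous.sub
    (continuous_finsetSum _ fun z _ => (continuous_apply z).mul continuous_const)

theorem dualObjective_sub_const [IsProbabilityMeasure μ] (hc : ∀ z, Measurable fun x => c x z)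
    (hB : ∀ x z, |c x z| ≤ B) {r : ι → ℝ} (hr : ∑ z, r z = 1) (p : ι → ℝ) (t : ℝ) :
    dualObjective μ c r (fun z => p z - t) = dualObjective μ c r p := by
  simp only [dualObjective, ciInf_add_sub_const, sub_mul, Finset.sum_sub_distrib,
    ← Finset.mul_sum, hr]
  rw [integral_sub (integrable_ciInf_add hc hB p) (integrable_const t), integral_const,
    probReal_univ, one_smul]
  ring

theorem dualObjective_le_min_const {r p : ι → ℝ} (hr : ∀ z, 0 ≤ r z) {z₀ : ι} {K : ℝ}
    (hK : ∀ x z, c x z₀ + p z₀ ≤ c x z + K) :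
    dualObjective μ c r p ≤ dualObjective μ c r fun z => min (p z) K := by
  have hsum : ∑ z, min (p z) K * r z ≤ ∑ z, p z * r z :=
    Finset.sum_le_sum fun z _ => mul_le_mul_of_nonneg_right (min_le_left _ _) (hr z)
  simp only [dualObjective, ciInf_add_min_const (hK _)]
  linarith

theorem exists_mem_Icc_dualObjective_le [IsProbabilityMeasure μ]
    (hc : ∀ z, Measurable fun x => c x z) (hB : ∀ x z, |c x z| ≤ B) {r : ι → ℝ}
    (hr : ∀ z, 0 ≤ r z) (hr1 : ∑ z, r z = 1) (p : ι → ℝ) :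
    ∃ q ∈ Set.Icc 0 fun _ => 2 * B, dualObjective μ c r p ≤ dualObjective μ c r q := by
  obtain ⟨z₀, hz₀⟩ := exists_eq_ciInf_of_finite (f := p)
  have hp : ∀ z, p z₀ ≤ p z := fun z => hz₀ ▸ ciInf_le (Set.finite_range p).bddBelow z
  have hB0 : 0 ≤ B := by
    obtain ⟨x⟩ := nonempty_of_isProbabilityMeasure μ
    exact (abs_nonneg _).trans (hB x z₀)
  refine ⟨fun z => min (p z - p z₀) (2 * B),
    ⟨fun z => le_min (sub_nonneg.2 (hp z)) (mul_nonneg zero_le_two hB0),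
      fun z => min_le_right _ _⟩, ?_⟩
  rw [← dualObjective_sub_const hc hB hr1 p (p z₀)]
  refine dualObjective_le_min_const (p := fun z => p z - p z₀) (z₀ := z₀) hr fun x z => ?_
  have := abs_le.1 (hB x z₀)
  have := abs_le.1 (hB x z)
  linarith

end DualObjective

theorem stmt_7_general
    {X : Type*} [TopologicalSpace X] [MeasurableSpace X] [BorelSpace X]
    {ι : Type*} [Fintype ι]
    (μ : Measure X) [IsProbabilityMeasure μ]
    (c1 : X → ι → ℝ)
    (hc1 : ∀ z, Continuous fun x => c1 x z) (hb1 : ∀ z, ∃ M, ∀ x, |c1 x z| ≤ M)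
    (r : ι → ℝ) (hr : ∀ z, 0 ≤ r z) (hr1 : ∑ z, r z = 1) :
    ∃ p0 : ι → ℝ, ∀ p : ι → ℝ,
      (∫ x, (⨅ z, c1 x z + p z) ∂μ) - ∑ z, p z * r z
        ≤ (∫ x, (⨅ z, c1 x z + p0 z) ∂μ) - ∑ z, p0 z * r z := by
  have : Nonempty ι :=
    Finset.univ_nonempty_iff.1 (Finset.nonempty_of_sum_ne_zero (hr1 ▸ one_ne_zero))
  choose M hM using hb1
  obtain ⟨B, hB⟩ := Finite.bddAbove_range M
  have hcB : ∀ x z, |c1 x z| ≤ B := fun x z => (hM z x).trans (hB ⟨z, rfl⟩)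
  have hc : ∀ z, Measurable fun x => c1 x z := fun z => (hc1 z).measurable
  exact exists_forall_le_of_forall_exists_mem_le isCompact_Icc
    (continuous_dualObjective hc hcB r).continuousOn
    (exists_mem_Icc_dualObjective_le hc hcB hr hr1)

/-- Under Assumption (a), for every `r ∈ Σ_m` the concave function
`p ↦ Ξ_μ(p) − Σ_z p_z r_z` attains its supremum at some `p₀ ∈ ℝ^{Z_m}`. -/
theorem stmt_7
    {X : Type*} [TopologicalSpace X] [PolishSpace X] [MeasurableSpace X] [BorelSpace X]
    {ι : Type*} [Fintype ι] [Nonempty ι]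
    (μ : Measure X) [IsProbabilityMeasure μ]
    (c1 : X → ι → ℝ)
    (hc1 : ∀ z, Continuous fun x => c1 x z) (hb1 : ∀ z, ∃ M, ∀ x, |c1 x z| ≤ M)
    (hatomless : ∀ x : X, μ {x} = 0)
    (hlevel : ∀ (t : ℝ) (z z' : ι), z ≠ z' → μ {x | c1 x z - c1 x z' = t} = 0)
    (r : ι → ℝ) (hr : ∀ z, 0 ≤ r z) (hr1 : ∑ z, r z = 1) :
    ∃ p0 : ι → ℝ, ∀ p : ι → ℝ,
      (∫ x, (⨅ z, c1 x z + p z) ∂μ) - ∑ z, p z * r z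
        ≤ (∫ x, (⨅ z, c1 x z + p0 z) ∂μ) - ∑ z, p0 z * r z :=
  stmt_7_general μ c1 hc1 hb1 r hr hr1
end

section
/- Under Assumption (a), the convex function v : Σ_m → ℝ defined by v(r) := sup_{p ∈ ℝ^{Z_m}} [ Ξ_μ(p) − Σ_{z∈Z_m} p_z r_z ] is strictly convex on Σ_m: for all r_1 ≠ r_2 in Σ_m one has v((r_1+r_2)/2) < (v(r_1)+v(r_2))/2. -/
/-!
For `r` in the simplex the supremum defining `v r` is attained: with `M` a bound for `|c|`,
replacing `p` by `min (p - min p) (2 M)` only shifts `ξ(p, ·)` by `-min p` and does not decrease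
the objective, so it suffices to maximise over a compact box. At a maximiser `p`, moving `p z₀`
up or down by `s` squeezes `r z₀` between the masses of the open and the closed Laguerre cells
`{x | z₀ minimises c x z + p z}`; these agree because the level sets of `c · z₀ - c · z` are
null. So `r` is the vector of cell masses of each of its maximisers. If convexity of `v` were an
equality at the midpoint of `r₁` and `r₂`, a maximiser for the midpoint would also be one for `r₁`
and for `r₂`, forcing `r₁ = r₂`.
-/

open MeasureTheory Filter Set

namespace SemiDiscreteOT

variable {X ι : Type*}

noncomputable def xi (c : X → ι → ℝ) (p : ι → ℝ) (x : X) : ℝ := ⨅ z, c x z + p z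

def laguerreCell (c : X → ι → ℝ) (p : ι → ℝ) (z₀ : ι) (t : ℝ) : Set X :=
  {x | ∀ z ≠ z₀, c x z₀ + p z₀ < c x z + p z + t}

def NullLevelSets [MeasurableSpace X] (μ : Measure X) (c : X → ι → ℝ) : Prop :=
  ∀ (t : ℝ) (z z' : ι), z ≠ z' → μ {x | c x z - c x z' = t} = 0

section Pointwise

variable {c : X → ι → ℝ} {p q : ι → ℝ} {x : X}

theorem monotone_laguerreCell (p : ι → ℝ) (z₀ : ι) : Monotone (laguerreCell c p z₀) :=
  fun _ _ hst _ hx z hz => (hx z hz).trans_le (by linarith)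

theorem le_xi [Nonempty ι] {b : ℝ} (h : ∀ z, b ≤ c x z + p z) : b ≤ xi c p x := le_ciInf h

variable [Fintype ι]

theorem xi_le (c : X → ι → ℝ) (p : ι → ℝ) (x : X) (z : ι) : xi c p x ≤ c x z + p z :=
  ciInf_le (Set.finite_range _).bddBelow z

variable [Nonempty ι]

theorem exists_xi_eq (c : X → ι → ℝ) (p : ι → ℝ) (x : X) : ∃ z, xi c p x = c x z + p z :=
  (exists_eq_ciInf_of_finite (f := fun z => c x z + p z)).imp fun _ h => h.symm

theorem xi_le_add_dist : xi c p x ≤ xi c q x + dist p q := by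
  obtain ⟨z, hz⟩ := exists_xi_eq c q x
  have : p z - q z ≤ dist p q :=
    (le_abs_self _).trans ((Real.dist_eq _ _).symm ▸ dist_le_pi_dist p q z)
  linarith [xi_le c p x z]

theorem abs_xi_le {M : ℝ} (hM : ∀ x z, |c x z| ≤ M) : |xi c p x| ≤ M + ‖p‖ := by
  have hp : ∀ z, |p z| ≤ ‖p‖ := fun z => (Real.norm_eq_abs _).symm ▸ norm_le_pi_norm p z
  obtain ⟨z, hz⟩ := exists_xi_eq c p x
  rw [abs_le, hz]
  have := abs_le.mp (hM x z)
  have := abs_le.mp (hp z)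
  constructor <;> linarith

/-- A coordinate more than `2 * M` above `p z₁` is never the active one in `xi`. -/
theorem xi_truncate {M : ℝ} (hM : ∀ x z, |c x z| ≤ M) (z₁ : ι) :
    xi c (fun z => min (p z - p z₁) (2 * M)) x = xi c p x - p z₁ := by
  obtain ⟨z, hz⟩ := exists_xi_eq c p x
  refine le_antisymm ?_ (le_xi fun w => ?_)
  · linarith [xi_le c (fun z => min (p z - p z₁) (2 * M)) x z, min_le_left (p z - p z₁) (2 * M)]
  · rcases min_cases (p w - p z₁) (2 * M) with ⟨h, -⟩ | ⟨h, -⟩ <;> rw [h]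
    · linarith [xi_le c p x w]
    · linarith [xi_le c p x z₁, (abs_le.mp (hM x w)).1, (abs_le.mp (hM x z₁)).2]

theorem indicator_laguerreCell_le [DecidableEq ι] (z₀ : ι) (s : ℝ) :
    (laguerreCell c p z₀ (-s)).indicator (fun _ => s) x
      ≤ xi c (p + Pi.single z₀ s) x - xi c p x := by
  have hpert : ∀ z, (p + Pi.single z₀ s : ι → ℝ) z = p z + if z = z₀ then s else 0 :=
    fun z => by simp [Pi.single_apply]
  by_cases hx : x ∈ laguerreCell c p z₀ (-s)
  · rw [indicator_of_mem hx]
    have : c x z₀ + p z₀ + s ≤ xi c (p + Pi.single z₀ s) x := le_xi fun z => by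
      rw [hpert]
      split_ifs with h
      · rw [h]; linarith
      · linarith [hx z h]
    linarith [xi_le c p x z₀]
  · rw [indicator_of_notMem hx, sub_nonneg]
    simp only [laguerreCell, mem_ofPred_eq, not_forall, not_lt] at hx
    obtain ⟨w, hw, hle⟩ := hx
    refine le_xi fun z => ?_
    rw [hpert]
    split_ifs with h
    · rw [h]; linarith [xi_le c p x w]
    · linarith [xi_le c p x z]

end Pointwise

variable [MeasurableSpace X] {μ : Measure X} {c : X → ι → ℝ} {M : ℝ}

theorem measurable_xi [Countable ι] (hc : ∀ z, Measurable fun x => c x z) (p : ι → ℝ) :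
    Measurable (xi c p) :=
  .iInf fun z => (hc z).add_const (p z)

theorem measurableSet_laguerreCell [Countable ι] (hc : ∀ z, Measurable fun x => c x z)
    (p : ι → ℝ) (z₀ : ι) (t : ℝ) : MeasurableSet (laguerreCell c p z₀ t) := by
  simp only [laguerreCell, ofPred_forall]
  exact .iInter fun z => .iInter fun _ => measurableSet_lt (by fun_prop) (by fun_prop)

theorem measure_biInter_laguerreCell [Countable ι] (hlevel : NullLevelSets μ c)
    (p : ι → ℝ) (z₀ : ι) :
    μ (⋂ t > 0, laguerreCell c p z₀ t) = μ (laguerreCell c p z₀ 0) := by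
  refine (measure_eq_measure_of_null_sdiff
    (subset_iInter₂ fun t ht => monotone_laguerreCell p z₀ ht.le) ?_).symm
  refine measure_mono_null (t := ⋃ z ∈ {z | z ≠ z₀}, {x | c x z₀ - c x z = p z - p z₀}) ?_
    ((measure_biUnion_null_iff (to_countable _)).2 fun z hz => hlevel _ _ _ (Ne.symm hz))
  rintro x ⟨hx, hx0⟩
  simp only [laguerreCell, mem_iInter, mem_ofPred_eq, not_forall, not_lt, add_zero] at hx hx0
  obtain ⟨w, hw, hle⟩ := hx0
  have : c x z₀ + p z₀ ≤ c x w + p w := le_of_forall_pos_lt_add fun t ht => hx t ht w hw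
  exact mem_biUnion hw (by simp only [mem_ofPred_eq]; linarith)

variable [Fintype ι]

noncomputable def Xi (μ : Measure X) (c : X → ι → ℝ) (p : ι → ℝ) : ℝ := ∫ x, xi c p x ∂μ

noncomputable def dualObjective (μ : Measure X) (c : X → ι → ℝ) (r p : ι → ℝ) : ℝ :=
  Xi μ c p - ∑ z, p z * r z

theorem iSup_dualObjective_eq {r p : ι → ℝ}
    (hmax : ∀ q, dualObjective μ c r q ≤ dualObjective μ c r p) :
    ⨆ q, dualObjective μ c r q = dualObjective μ c r p :=
  (ciSup_le hmax).antisymm (le_ciSup ⟨_, forall_mem_range.2 hmax⟩ p)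

theorem dualObjective_midpoint (r₁ r₂ p : ι → ℝ) :
    dualObjective μ c (fun z => (r₁ z + r₂ z) / 2) p
      = (dualObjective μ c r₁ p + dualObjective μ c r₂ p) / 2 := by
  have hsum : ∑ z, p z * ((r₁ z + r₂ z) / 2) = ((∑ z, p z * r₁ z) + ∑ z, p z * r₂ z) / 2 := by
    rw [← Finset.sum_add_distrib, Finset.sum_div]
    exact Finset.sum_congr rfl fun z _ => by ring
  rw [dualObjective, dualObjective, dualObjective, hsum]
  ring

variable [Nonempty ι]

theorem integrable_xi [IsFiniteMeasure μ] (hc : ∀ z, Measurable fun x => c x z)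
    (hM : ∀ x z, |c x z| ≤ M) (p : ι → ℝ) : Integrable (xi c p) μ :=
  .of_bound (measurable_xi hc p).aestronglyMeasurable (M + ‖p‖)
    (ae_of_all _ fun _ => (Real.norm_eq_abs _).trans_le (abs_xi_le hM))

variable [IsProbabilityMeasure μ]

theorem lipschitzWith_Xi (hc : ∀ z, Measurable fun x => c x z) (hM : ∀ x z, |c x z| ≤ M) :
    LipschitzWith 1 (Xi μ c) := .of_le_add fun p q => by
  calc Xi μ c p ≤ ∫ x, xi c q x + dist p q ∂μ :=
        integral_mono (integrable_xi hc hM p) ((integrable_xi hc hM q).add (integrable_const _))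
          fun _ => xi_le_add_dist
    _ = Xi μ c q + dist p q := by
        rw [integral_add (integrable_xi hc hM q) (integrable_const _)]
        simp [Xi]

theorem continuous_dualObjective (hc : ∀ z, Measurable fun x => c x z)
    (hM : ∀ x z, |c x z| ≤ M) (r : ι → ℝ) : Continuous (dualObjective μ c r) :=
  (lipschitzWith_Xi hc hM).continuous.sub (by fun_prop)

theorem le_dualObjective_truncate (hc : ∀ z, Measurable fun x => c x z)
    (hM : ∀ x z, |c x z| ≤ M) {r : ι → ℝ} (hr0 : ∀ z, 0 ≤ r z) (hr1 : ∑ z, r z = 1)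
    (p : ι → ℝ) (z₁ : ι) :
    dualObjective μ c r p ≤ dualObjective μ c r fun z => min (p z - p z₁) (2 * M) := by
  have hXi : Xi μ c (fun z => min (p z - p z₁) (2 * M)) = Xi μ c p - p z₁ := by
    simp only [Xi, xi_truncate hM z₁]
    rw [integral_sub (integrable_xi hc hM p) (integrable_const _)]
    simp
  have hsum : ∑ z, min (p z - p z₁) (2 * M) * r z ≤ ∑ z, p z * r z - p z₁ :=
    calc _ ≤ ∑ z, (p z - p z₁) * r z :=
          Finset.sum_le_sum fun z _ => mul_le_mul_of_nonneg_right (min_le_left _ _) (hr0 z)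
      _ = ∑ z, p z * r z - p z₁ := by
          simp only [sub_mul, Finset.sum_sub_distrib, ← Finset.mul_sum, hr1, mul_one]
  rw [dualObjective, dualObjective, hXi]
  linarith

theorem exists_forall_dualObjective_le (hc : ∀ z, Measurable fun x => c x z)
    (hM : ∀ x z, |c x z| ≤ M) {r : ι → ℝ} (hr0 : ∀ z, 0 ≤ r z) (hr1 : ∑ z, r z = 1) :
    ∃ p₀, ∀ p, dualObjective μ c r p ≤ dualObjective μ c r p₀ := by
  obtain ⟨x⟩ := nonempty_of_isProbabilityMeasure μ
  have hM0 : 0 ≤ M := (abs_nonneg _).trans (hM x (Classical.arbitrary ι))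
  have hbox := isCompact_univ_pi fun _ : ι => isCompact_Icc (a := 0) (b := 2 * M)
  obtain ⟨p₀, -, hp₀⟩ := hbox.exists_isMaxOn
    ⟨0, fun _ _ => ⟨le_rfl, by simp only [Pi.zero_apply]; linarith⟩⟩
    (continuous_dualObjective (μ := μ) hc hM r).continuousOn
  refine ⟨p₀, fun p => ?_⟩
  obtain ⟨z₁, hz₁⟩ := Finite.exists_min p
  exact (le_dualObjective_truncate hc hM hr0 hr1 p z₁).trans
    (hp₀ fun z _ => ⟨le_min (sub_nonneg.2 (hz₁ z)) (by linarith), min_le_right _ _⟩)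

theorem le_iSup_dualObjective (hc : ∀ z, Measurable fun x => c x z)
    (hM : ∀ x z, |c x z| ≤ M) {r : ι → ℝ} (hr0 : ∀ z, 0 ≤ r z) (hr1 : ∑ z, r z = 1)
    (q : ι → ℝ) : dualObjective μ c r q ≤ ⨆ p, dualObjective μ c r p := by
  obtain ⟨p, hp⟩ := exists_forall_dualObjective_le (μ := μ) hc hM hr0 hr1
  exact (hp q).trans (iSup_dualObjective_eq hp).ge

variable [DecidableEq ι] {r p : ι → ℝ}

/-- First-order condition at a maximiser `p`: for `s > 0` it bounds the mass of a cell from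
above by `r z₀`, for `s < 0` from below. -/
theorem mul_measureReal_laguerreCell_le (hc : ∀ z, Measurable fun x => c x z)
    (hM : ∀ x z, |c x z| ≤ M) (hmax : ∀ q, dualObjective μ c r q ≤ dualObjective μ c r p)
    (z₀ : ι) (s : ℝ) : s * μ.real (laguerreCell c p z₀ (-s)) ≤ s * r z₀ := by
  have hcell := measurableSet_laguerreCell hc p z₀ (-s)
  have hXi : s * μ.real (laguerreCell c p z₀ (-s))
      ≤ Xi μ c (p + Pi.single z₀ s) - Xi μ c p := by
    have := integral_mono ((integrable_const s).indicator hcell)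
      ((integrable_xi (μ := μ) hc hM _).sub (integrable_xi hc hM p))
      fun x => indicator_laguerreCell_le z₀ s
    rwa [integral_indicator_const _ hcell, integral_sub' (integrable_xi hc hM _)
      (integrable_xi hc hM p), smul_eq_mul, mul_comm] at this
  have hsum : ∑ z, (p + Pi.single z₀ s : ι → ℝ) z * r z = ∑ z, p z * r z + s * r z₀ := by
    simp [add_mul, Finset.sum_add_distrib, Pi.single_apply]
  have := hmax (p + Pi.single z₀ s)
  rw [dualObjective, dualObjective, hsum] at this
  linarith

theorem measureReal_laguerreCell_zero_le (hc : ∀ z, Measurable fun x => c x z)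
    (hM : ∀ x z, |c x z| ≤ M) (hmax : ∀ q, dualObjective μ c r q ≤ dualObjective μ c r p)
    (z₀ : ι) : μ.real (laguerreCell c p z₀ 0) ≤ r z₀ := by
  set t : ℕ → ℝ := fun n => 1 / (n + 1)
  have hle : ∀ n, μ.real (laguerreCell c p z₀ (-t n)) ≤ r z₀ := fun n =>
    le_of_mul_le_mul_left (mul_measureReal_laguerreCell_le hc hM hmax z₀ (t n))
      Nat.one_div_pos_of_nat
  have hmono : Monotone fun n => laguerreCell c p z₀ (-t n) := fun n m hnm =>
    monotone_laguerreCell p z₀ (neg_le_neg (Nat.one_div_le_one_div hnm))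
  have hsub : laguerreCell c p z₀ 0 ⊆ ⋃ n, laguerreCell c p z₀ (-t n) := fun x hx => by
    have : ∀ᶠ n in atTop, ∀ z, z ≠ z₀ → c x z₀ + p z₀ + t n < c x z + p z := by
      refine eventually_all.2 fun z => ?_
      by_cases hz : z = z₀
      · exact .of_forall fun _ h => (h hz).elim
      · have hgap : 0 < c x z + p z - (c x z₀ + p z₀) := by linarith [hx z hz]
        filter_upwards [tendsto_one_div_add_atTop_nhds_zero_nat.eventually (gt_mem_nhds hgap)]
          with n hn _
        linarith
    obtain ⟨n, hn⟩ := this.exists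
    exact mem_iUnion.2 ⟨n, fun z hz => by linarith [hn z hz]⟩
  calc μ.real (laguerreCell c p z₀ 0) ≤ μ.real (⋃ n, laguerreCell c p z₀ (-t n)) :=
        measureReal_mono hsub
    _ ≤ r z₀ := le_of_tendsto' ((ENNReal.tendsto_toReal (measure_ne_top _ _)).comp
        (tendsto_measure_iUnion_atTop hmono)) hle

theorem le_measureReal_laguerreCell_zero (hc : ∀ z, Measurable fun x => c x z)
    (hM : ∀ x z, |c x z| ≤ M) (hlevel : NullLevelSets μ c)
    (hmax : ∀ q, dualObjective μ c r q ≤ dualObjective μ c r p) (z₀ : ι) :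
    r z₀ ≤ μ.real (laguerreCell c p z₀ 0) := by
  have hle : ∀ t > 0, r z₀ ≤ μ.real (laguerreCell c p z₀ t) := fun t ht => by
    have := mul_measureReal_laguerreCell_le hc hM hmax z₀ (-t)
    rw [neg_neg, neg_mul, neg_mul, neg_le_neg_iff] at this
    exact le_of_mul_le_mul_left this ht
  have hlim := tendsto_measure_biInter_gt (μ := μ) (a := (0 : ℝ))
    (fun t _ => (measurableSet_laguerreCell hc p z₀ t).nullMeasurableSet)
    (fun _ _ _ hij => monotone_laguerreCell p z₀ hij) ⟨1, one_pos, measure_ne_top _ _⟩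
  rw [measure_biInter_laguerreCell hlevel] at hlim
  exact ge_of_tendsto ((ENNReal.tendsto_toReal (measure_ne_top _ _)).comp hlim)
    (eventually_nhdsWithin_of_forall hle)

theorem eq_measureReal_laguerreCell_of_isMax (hc : ∀ z, Measurable fun x => c x z)
    (hM : ∀ x z, |c x z| ≤ M) (hlevel : NullLevelSets μ c)
    (hmax : ∀ q, dualObjective μ c r q ≤ dualObjective μ c r p) (z₀ : ι) :
    r z₀ = μ.real (laguerreCell c p z₀ 0) :=
  (le_measureReal_laguerreCell_zero hc hM hlevel hmax z₀).antisymm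
    (measureReal_laguerreCell_zero_le hc hM hmax z₀)

theorem iSup_dualObjective_midpoint_lt (hc : ∀ z, Measurable fun x => c x z)
    (hM : ∀ x z, |c x z| ≤ M) (hlevel : NullLevelSets μ c)
    {r₁ r₂ : ι → ℝ} (h₁0 : ∀ z, 0 ≤ r₁ z) (h₁1 : ∑ z, r₁ z = 1)
    (h₂0 : ∀ z, 0 ≤ r₂ z) (h₂1 : ∑ z, r₂ z = 1) (hne : r₁ ≠ r₂) :
    ⨆ p, dualObjective μ c (fun z => (r₁ z + r₂ z) / 2) p
      < ((⨆ p, dualObjective μ c r₁ p) + ⨆ p, dualObjective μ c r₂ p) / 2 := by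
  obtain ⟨p, hp⟩ := exists_forall_dualObjective_le (μ := μ)
    (r := fun z => (r₁ z + r₂ z) / 2) hc hM (fun z => by linarith [h₁0 z, h₂0 z])
    (by rw [← Finset.sum_div, Finset.sum_add_distrib, h₁1, h₂1]; norm_num)
  have h₁ : ∀ q, dualObjective μ c r₁ q ≤ ⨆ p, dualObjective μ c r₁ p :=
    le_iSup_dualObjective hc hM h₁0 h₁1
  have h₂ : ∀ q, dualObjective μ c r₂ q ≤ ⨆ p, dualObjective μ c r₂ p :=
    le_iSup_dualObjective hc hM h₂0 h₂1
  rw [iSup_dualObjective_eq hp, dualObjective_midpoint]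
  refine (div_le_div_of_nonneg_right (add_le_add (h₁ p) (h₂ p)) zero_le_two).lt_of_ne
    fun heq => hne ?_
  have hmax₁ : ∀ q, dualObjective μ c r₁ q ≤ dualObjective μ c r₁ p := fun q => by
    linarith [h₁ q, h₂ p]
  have hmax₂ : ∀ q, dualObjective μ c r₂ q ≤ dualObjective μ c r₂ p := fun q => by
    linarith [h₁ p, h₂ q]
  exact funext fun z => (eq_measureReal_laguerreCell_of_isMax hc hM hlevel hmax₁ z).trans
    (eq_measureReal_laguerreCell_of_isMax hc hM hlevel hmax₂ z).symm

end SemiDiscreteOT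

theorem stmt_8_general
    {X : Type*} [TopologicalSpace X] [MeasurableSpace X] [BorelSpace X]
    {ι : Type*} [Fintype ι] [Nonempty ι]
    (μ : Measure X) [IsProbabilityMeasure μ]
    (c1 : X → ι → ℝ)
    (hc1 : ∀ z, Continuous fun x => c1 x z) (hb1 : ∀ z, ∃ M, ∀ x, |c1 x z| ≤ M)
    (hlevel : ∀ (t : ℝ) (z z' : ι), z ≠ z' → μ {x | c1 x z - c1 x z' = t} = 0)
    (v : (ι → ℝ) → ℝ)
    (hv : ∀ r : ι → ℝ,
      v r = ⨆ p : ι → ℝ, ((∫ x, (⨅ z, c1 x z + p z) ∂μ) - ∑ z, p z * r z)) :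
    ∀ r1 r2 : ι → ℝ,
      (∀ z, 0 ≤ r1 z) → (∑ z, r1 z) = 1 →
      (∀ z, 0 ≤ r2 z) → (∑ z, r2 z) = 1 →
      r1 ≠ r2 →
      v (fun z => (r1 z + r2 z) / 2) < (v r1 + v r2) / 2 := by
  intro r1 r2 h10 h11 h20 h21 hne
  classical
  choose Mz hMz using hb1
  obtain ⟨M, hM⟩ := Finite.exists_le Mz
  rw [hv, hv, hv]
  exact SemiDiscreteOT.iSup_dualObjective_midpoint_lt (fun z => (hc1 z).measurable)
    (fun x z => (hMz z x).trans (hM z)) hlevel h10 h11 h20 h21 hne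

/-- Under Assumption (a), the convex function
`v(r) := sup_p [Ξ_μ(p) − Σ_z p_z r_z]` is strictly convex on `Σ_m`. -/
theorem stmt_8
    {X : Type*} [TopologicalSpace X] [PolishSpace X] [MeasurableSpace X] [BorelSpace X]
    {ι : Type*} [Fintype ι] [Nonempty ι]
    (μ : Measure X) [IsProbabilityMeasure μ]
    (c1 : X → ι → ℝ)
    (hc1 : ∀ z, Continuous fun x => c1 x z) (hb1 : ∀ z, ∃ M, ∀ x, |c1 x z| ≤ M)
    (hatomless : ∀ x : X, μ {x} = 0)
    (hlevel : ∀ (t : ℝ) (z z' : ι), z ≠ z' → μ {x | c1 x z - c1 x z' = t} = 0)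
    (v : (ι → ℝ) → ℝ)
    (hv : ∀ r : ι → ℝ,
      v r = ⨆ p : ι → ℝ, ((∫ x, (⨅ z, c1 x z + p z) ∂μ) - ∑ z, p z * r z)) :
    ∀ r1 r2 : ι → ℝ,
      (∀ z, 0 ≤ r1 z) → (∑ z, r1 z) = 1 →
      (∀ z, 0 ≤ r2 z) → (∑ z, r2 z) = 1 →
      r1 ≠ r2 →
      v (fun z => (r1 z + r2 z) / 2) < (v r1 + v r2) / 2 :=
  stmt_8_general μ c1 hc1 hb1 hlevel v hv
end

section
/- Let ((μ_z),(ν_z)) ∈ 𝒫_X^Y(μ,ν) be a partition pair attaining c^{Z_m}(μ,ν), i.e. c^{Z_m}(μ,ν) = Σ_{z∈Z_m}[∫_X c¹(x,z) dμ_z + ∫_Y c²(z,y) dν_z]. For each z ∈ Z_m let ζ(z) ∈ Z be a minimizer of ζ ↦ ∫_X c¹(x,ζ) dμ_z(x) + ∫_Y c²(ζ,y) dν_z(y), and let Z_m^{new} := {ζ(z) : z ∈ Z_m}. Then c^{Z_m^{new}}(μ,ν) ≤ c^{Z_m}(μ,ν), where c^{Z_m^{new}}(x,y) := min_{ζ∈Z_m^{new}}[c¹(x,ζ)+c²(ζ,y)]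 and c^{Z_m^{new}}(μ,ν) is the corresponding Kantorovich infimum over couplings of μ and ν. -/
open MeasureTheory

/-!
Glue the product couplings `r_z⁻¹ • μ_z ⊗ ν_z` into one coupling of `μ` and `ν`. On the `z`-th
piece the minimum over the new centres is at most the value at `ζ(z)`, so the new semi-discrete
cost of this coupling is at most `Σ_z [∫ c¹(x, ζ z) dμ_z + ∫ c²(ζ z, y) dν_z]`. By the choice of
`ζ` that sum is at most the same sum at the old centres `z`, which is the optimal old cost.
-/

section SemiDiscreteTransport

open Set

variable {X Y Z ι : Type*}

section Coupling

variable [MeasurableSpace X] [MeasurableSpace Y]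

lemma measure_univ_of_map_fst {π : Measure (X × Y)} {m : Measure X} (h : π.map Prod.fst = m) :
    π univ = m univ := by
  rw [← h, Measure.map_apply measurable_fst MeasurableSet.univ, preimage_univ]

lemma integral_comp_fst_add_comp_snd {π : Measure (X × Y)} {f : X → ℝ} {g : Y → ℝ}
    (hf : Integrable f (π.map Prod.fst)) (hg : Integrable g (π.map Prod.snd)) :
    ∫ q, (f q.1 + g q.2) ∂π = ∫ x, f x ∂(π.map Prod.fst) + ∫ y, g y ∂(π.map Prod.snd) := by
  refine (integral_add (hf.comp_measurable measurable_fst)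
    (hg.comp_measurable measurable_snd)).trans ?_
  rw [integral_map measurable_fst.aemeasurable hf.aestronglyMeasurable,
    integral_map measurable_snd.aemeasurable hg.aestronglyMeasurable]
  rfl

lemma kant_le_integral {μ : Measure X} {ν : Measure Y} {c : X → Y → ℝ} (hc : ∃ B, ∀ x y, B ≤ c x y)
    (π : Measure (X × Y)) [IsProbabilityMeasure π] (hμ : π.map Prod.fst = μ)
    (hν : π.map Prod.snd = ν) : kant μ ν c ≤ ∫ q, c q.1 q.2 ∂π := by
  obtain ⟨B, hB⟩ := hc
  -- `min B 0` rather than `B`: a non-integrable cost has integral `0`.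
  refine csInf_le ⟨min B 0, ?_⟩ ⟨π, inferInstance, hμ, hν, rfl⟩
  rintro _ ⟨π', hπ', -, -, rfl⟩
  by_cases hint : Integrable (fun q : X × Y => c q.1 q.2) π'
  · calc min B 0 ≤ B := min_le_left _ _
      _ = ∫ _, B ∂π' := by simp
      _ ≤ _ := integral_mono (integrable_const B) hint fun q => hB q.1 q.2
  · rw [integral_undef hint]
    exact min_le_right _ _

noncomputable def indepCoupling (m : Measure X) (n : Measure Y) : Measure (X × Y) :=
  (m univ)⁻¹ • m.prod n

lemma measure_univ_inv_mul_smul (m : Measure X) [IsFiniteMeasure m] :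
    ((m univ)⁻¹ * m univ) • m = m := by
  by_cases h : m = 0
  · simp [h]
  · rw [ENNReal.inv_mul_cancel (by simpa using h) (measure_ne_top _ _), one_smul]

variable {m : Measure X} {n : Measure Y}

lemma map_fst_indepCoupling [IsFiniteMeasure m] [SFinite n] (h : m univ = n univ) :
    (indepCoupling m n).map Prod.fst = m := by
  rw [indepCoupling, Measure.map_smul, Measure.map_fst_prod, smul_smul, ← h,
    measure_univ_inv_mul_smul]

lemma map_snd_indepCoupling [IsFiniteMeasure n] (h : m univ = n univ) :
    (indepCoupling m n).map Prod.snd = n := by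
  rw [indepCoupling, Measure.map_smul, Measure.map_snd_prod, smul_smul, h,
    measure_univ_inv_mul_smul]

end Coupling

/-- The cost `c^{Z_m}` of the paper, for the set of centres `Z_m = range g`. -/
noncomputable def semiDiscreteCost (c1 : X → Z → ℝ) (c2 : Z → Y → ℝ) (g : ι → Z) (x : X) (y : Y) :
    ℝ :=
  ⨅ i, (c1 x (g i) + c2 (g i) y)

section SemiDiscreteCost

variable {c1 : X → Z → ℝ} {c2 : Z → Y → ℝ} {g : ι → Z} {M1 M2 : ℝ}

lemma semiDiscreteCost_le [Finite ι] (x : X) (y : Y) (i : ι) :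
    semiDiscreteCost c1 c2 g x y ≤ c1 x (g i) + c2 (g i) y :=
  ciInf_le (finite_range _).bddBelow i

lemma abs_semiDiscreteCost_le [Finite ι] [Nonempty ι] (hb1 : ∀ x w, |c1 x w| ≤ M1)
    (hb2 : ∀ w y, |c2 w y| ≤ M2) (x : X) (y : Y) :
    |semiDiscreteCost c1 c2 g x y| ≤ M1 + M2 := by
  obtain ⟨i⟩ := ‹Nonempty ι›
  rw [abs_le]
  constructor
  · refine le_ciInf fun j => ?_
    linarith [(abs_le.mp (hb1 x (g j))).1, (abs_le.mp (hb2 (g j) y)).1]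
  · linarith [semiDiscreteCost_le (c1 := c1) (c2 := c2) (g := g) x y i,
      (abs_le.mp (hb1 x (g i))).2, (abs_le.mp (hb2 (g i) y)).2]

variable [MeasurableSpace X] [MeasurableSpace Y]

lemma measurable_semiDiscreteCost [Countable ι] (hc1 : ∀ w, Measurable fun x => c1 x w)
    (hc2 : ∀ w, Measurable (c2 w)) :
    Measurable fun q : X × Y => semiDiscreteCost c1 c2 g q.1 q.2 :=
  Measurable.iInf fun i => ((hc1 (g i)).comp measurable_fst).add ((hc2 (g i)).comp measurable_snd)

lemma integral_semiDiscreteCost_le [Finite ι] [Nonempty ι] (hc1 : ∀ w, Measurable fun x => c1 x w)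
    (hb1 : ∀ x w, |c1 x w| ≤ M1) (hc2 : ∀ w, Measurable (c2 w)) (hb2 : ∀ w y, |c2 w y| ≤ M2)
    (π : Measure (X × Y)) [IsFiniteMeasure π] (i : ι) :
    ∫ q, semiDiscreteCost c1 c2 g q.1 q.2 ∂π
      ≤ ∫ x, c1 x (g i) ∂(π.map Prod.fst) + ∫ y, c2 (g i) y ∂(π.map Prod.snd) := by
  have hint1 : ∀ m : Measure X, [IsFiniteMeasure m] → Integrable (fun x => c1 x (g i)) m :=
    fun m _ => .of_bound (hc1 (g i)).aestronglyMeasurable M1 (ae_of_all _ fun x => hb1 x (g i))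
  have hint2 : ∀ n : Measure Y, [IsFiniteMeasure n] → Integrable (c2 (g i)) n :=
    fun n _ => .of_bound (hc2 (g i)).aestronglyMeasurable M2 (ae_of_all _ fun y => hb2 (g i) y)
  rw [← integral_comp_fst_add_comp_snd (hint1 _) (hint2 _)]
  refine integral_mono (.of_bound (measurable_semiDiscreteCost hc1 hc2).aestronglyMeasurable
    (M1 + M2) (ae_of_all _ fun q => abs_semiDiscreteCost_le hb1 hb2 q.1 q.2)) ?_
    fun q => semiDiscreteCost_le q.1 q.2 i
  exact (hint1 _).comp_measurable measurable_fst |>.add ((hint2 _).comp_measurable measurable_snd)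

end SemiDiscreteCost

lemma kant_semiDiscreteCost_le_sum [MeasurableSpace X] [MeasurableSpace Y] [Fintype ι] [Nonempty ι]
    {c1 : X → Z → ℝ} {c2 : Z → Y → ℝ} {M1 M2 : ℝ} (hc1 : ∀ w, Measurable fun x => c1 x w)
    (hb1 : ∀ x w, |c1 x w| ≤ M1) (hc2 : ∀ w, Measurable (c2 w)) (hb2 : ∀ w y, |c2 w y| ≤ M2)
    {μ : Measure X} {ν : Measure Y} [IsProbabilityMeasure μ] {μv : ι → Measure X}
    {νv : ι → Measure Y} (hμ : ∑ i, μv i = μ) (hν : ∑ i, νv i = ν)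
    (hmass : ∀ i, μv i univ = νv i univ) (g : ι → Z) :
    kant μ ν (semiDiscreteCost c1 c2 g)
      ≤ ∑ i, (∫ x, c1 x (g i) ∂(μv i) + ∫ y, c2 (g i) y ∂(νv i)) := by
  have hμv : ∀ i, IsFiniteMeasure (μv i) := fun i =>
    isFiniteMeasure_of_le μ (hμ ▸ Finset.single_le_sum (fun j _ => Measure.zero_le (μv j))
      (Finset.mem_univ i))
  have hνv : ∀ i, IsFiniteMeasure (νv i) := fun i => ⟨hmass i ▸ measure_lt_top _ _⟩
  set T := fun i => indepCoupling (μv i) (νv i)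
  have hT1 : ∀ i, (T i).map Prod.fst = μv i := fun i => map_fst_indepCoupling (hmass i)
  have hT2 : ∀ i, (T i).map Prod.snd = νv i := fun i => map_snd_indepCoupling (hmass i)
  have hTfin : ∀ i, IsFiniteMeasure (T i) := fun i =>
    ⟨measure_univ_of_map_fst (hT1 i) ▸ measure_lt_top _ _⟩
  have hπ1 : (∑ i, T i).map Prod.fst = μ := by
    rw [Measure.map_finset_sum' measurable_fst.aemeasurable, ← hμ]
    exact Finset.sum_congr rfl fun i _ => hT1 i
  have hπ2 : (∑ i, T i).map Prod.snd = ν := by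
    rw [Measure.map_finset_sum' measurable_snd.aemeasurable, ← hν]
    exact Finset.sum_congr rfl fun i _ => hT2 i
  have : IsProbabilityMeasure (∑ i, T i) :=
    ⟨by rw [measure_univ_of_map_fst hπ1, measure_univ]⟩
  have hbound := abs_semiDiscreteCost_le (g := g) hb1 hb2
  calc kant μ ν (semiDiscreteCost c1 c2 g)
      ≤ ∫ q, semiDiscreteCost c1 c2 g q.1 q.2 ∂(∑ i, T i) :=
        kant_le_integral ⟨-(M1 + M2), fun x y => (abs_le.mp (hbound x y)).1⟩ _ hπ1 hπ2
    _ = ∑ i, ∫ q, semiDiscreteCost c1 c2 g q.1 q.2 ∂(T i) :=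
        integral_finsetSum_measure fun i _ =>
          .of_bound (measurable_semiDiscreteCost hc1 hc2).aestronglyMeasurable _
            (ae_of_all _ fun q => hbound q.1 q.2)
    _ ≤ _ := Finset.sum_le_sum fun i _ => by
        simpa only [hT1, hT2] using integral_semiDiscreteCost_le hc1 hb1 hc2 hb2 (T i) i

end SemiDiscreteTransport

theorem stmt_11_general
    {X Y Z : Type*} [TopologicalSpace X] [MeasurableSpace X] [BorelSpace X]
    [TopologicalSpace Y] [MeasurableSpace Y] [BorelSpace Y]
    [MetricSpace Z]
    (μ : Measure X) (ν : Measure Y) [IsProbabilityMeasure μ]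
    (c1 : X → Z → ℝ) (c2 : Z → Y → ℝ)
    (hc1 : Continuous fun q : X × Z => c1 q.1 q.2) (hb1 : ∃ M, ∀ x w, |c1 x w| ≤ M)
    (hc2 : Continuous fun q : Z × Y => c2 q.1 q.2) (hb2 : ∃ M, ∀ w y, |c2 w y| ≤ M)
    (Zm : Finset Z) (hZm : Zm.Nonempty)
    (μv : Zm → Measure X) (νv : Zm → Measure Y) (r : Zm → ℝ)
    (hμsum : (∑ z, μv z) = μ) (hνsum : (∑ z, νv z) = ν)
    (hμmass : ∀ z, μv z Set.univ = ENNReal.ofReal (r z))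
    (hνmass : ∀ z, νv z Set.univ = ENNReal.ofReal (r z))
    (hopt : kant μ ν (fun x y => ⨅ z : Zm, (c1 x z + c2 z y))
      = ∑ z, ((∫ x, c1 x z ∂(μv z)) + ∫ y, c2 z y ∂(νv z)))
    (ζ : Zm → Z)
    (hζ : ∀ z : Zm, ∀ w : Z,
      (∫ x, c1 x (ζ z) ∂(μv z)) + (∫ y, c2 (ζ z) y ∂(νv z))
        ≤ (∫ x, c1 x w ∂(μv z)) + ∫ y, c2 w y ∂(νv z)) :
    kant μ ν (fun x y => ⨅ z : Zm, (c1 x (ζ z) + c2 (ζ z) y))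
      ≤ kant μ ν (fun x y => ⨅ z : Zm, (c1 x z + c2 z y)) := by
  have : Nonempty Zm := hZm.coe_sort
  obtain ⟨M1, hM1⟩ := hb1
  obtain ⟨M2, hM2⟩ := hb2
  have hmeas1 : ∀ w, Measurable fun x => c1 x w := fun w =>
    (hc1.comp (continuous_id.prodMk continuous_const)).measurable
  have hmeas2 : ∀ w, Measurable (c2 w) := fun w =>
    (hc2.comp (continuous_const.prodMk continuous_id)).measurable
  calc kant μ ν (fun x y => ⨅ z : Zm, (c1 x (ζ z) + c2 (ζ z) y))
      ≤ ∑ z, (∫ x, c1 x (ζ z) ∂(μv z) + ∫ y, c2 (ζ z) y ∂(νv z)) :=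
        kant_semiDiscreteCost_le_sum hmeas1 hM1 hmeas2 hM2 hμsum hνsum
          (fun z => (hμmass z).trans (hνmass z).symm) ζ
    _ ≤ ∑ z, (∫ x, c1 x z ∂(μv z) + ∫ y, c2 z y ∂(νv z)) :=
        Finset.sum_le_sum fun z _ => hζ z z
    _ = _ := hopt.symm

/-- if `((μ_z),(ν_z))` is an optimal partition pair for `c^{Z_m}(μ,ν)`
and each `ζ(z)` minimizes `ζ ↦ ∫ c¹(x,ζ) dμ_z + ∫ c²(ζ,y) dν_z`, then the new center
set `Z_m^{new} = {ζ(z)}` improves the cost: `c^{Z_m^{new}}(μ,ν) ≤ c^{Z_m}(μ,ν)`. -/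
theorem stmt_11
    {X Y Z : Type*} [TopologicalSpace X] [PolishSpace X] [MeasurableSpace X] [BorelSpace X]
    [TopologicalSpace Y] [PolishSpace Y] [MeasurableSpace Y] [BorelSpace Y]
    [MetricSpace Z] [CompactSpace Z]
    (μ : Measure X) (ν : Measure Y) [IsProbabilityMeasure μ] [IsProbabilityMeasure ν]
    (c1 : X → Z → ℝ) (c2 : Z → Y → ℝ)
    (hc1 : Continuous fun q : X × Z => c1 q.1 q.2) (hb1 : ∃ M, ∀ x w, |c1 x w| ≤ M)
    (hc2 : Continuous fun q : Z × Y => c2 q.1 q.2) (hb2 : ∃ M, ∀ w y, |c2 w y| ≤ M)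
    (Zm : Finset Z) (hZm : Zm.Nonempty)
    (μv : Zm → Measure X) (νv : Zm → Measure Y) (r : Zm → ℝ)
    (hrpos : ∀ z, 0 ≤ r z) (hrsum : ∑ z, r z = 1)
    (hμsum : (∑ z, μv z) = μ) (hνsum : (∑ z, νv z) = ν)
    (hμmass : ∀ z, μv z Set.univ = ENNReal.ofReal (r z))
    (hνmass : ∀ z, νv z Set.univ = ENNReal.ofReal (r z))
    (hopt : kant μ ν (fun x y => ⨅ z : Zm, (c1 x z + c2 z y))
      = ∑ z, ((∫ x, c1 x z ∂(μv z)) + ∫ y, c2 z y ∂(νv z)))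
    (ζ : Zm → Z)
    (hζ : ∀ z : Zm, ∀ w : Z,
      (∫ x, c1 x (ζ z) ∂(μv z)) + (∫ y, c2 (ζ z) y ∂(νv z))
        ≤ (∫ x, c1 x w ∂(μv z)) + ∫ y, c2 w y ∂(νv z)) :
    kant μ ν (fun x y => ⨅ z : Zm, (c1 x (ζ z) + c2 (ζ z) y))
      ≤ kant μ ν (fun x y => ⨅ z : Zm, (c1 x z + c2 z y)) :=
  stmt_11_general μ ν c1 c2 hc1 hb1 hc2 hb2 Zm hZm μv νv r hμsum hνsum hμmass hνmass hopt ζ hζ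
end
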